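/- arXiv:math/9905079 — 8 statements merged into one kernel-verified Lean document; each statement's English description precedes it below -/
import Mathlib

section
/- Let n ≥ 1 and let V(n) be the n×n matrix over the field ℚ(x) of rational functions whose (i,j) entry, for 1 ≤ i,j ≤ n, is V_{ij}(n) = (-1)^{e(n,i,j)} · f_{i+j-1} · ((n+i-1 choose n-j))_x · ((n+j-1 choose n-i))_x · ((i+j-2 choose i-1))_x^2. Then V(n) is the inverse of the matrix R_n(f_k(x)) whose (i,j) entry is 1/f_{i+j-1}(x), and every entry of V(n) is a polynomial with integer coefficients. -/
/-- The Fibonacci polynomials: `f 0 = 0`, `f 1 = 1`, `f (n+2) = X * f (n+1) + f n`. -/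
noncomputable def fibPoly : ℕ → Polynomial ℤ
  | 0 => 0
  | 1 => 1
  | n + 2 => Polynomial.X * fibPoly (n + 1) + fibPoly n

/-- The Fibonacci polynomial `f n`, viewed as an element of the field `ℚ(x)`
of rational functions. -/
noncomputable def fp (n : ℕ) : RatFunc ℚ :=
  algebraMap (Polynomial ℚ) (RatFunc ℚ) ((fibPoly n).map (Int.castRingHom ℚ))

/-- The `x`-Fibonomial coefficient `((n choose k))_x = ∏_{i=1}^{k} f_{n-i+1} / f_i`
as an element of `ℚ(x)`.  It equals `0` when `k < 0` (and also when `k > n`,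
since then a factor `f 0 = 0` appears in the numerator). -/
noncomputable def xfibinom (n : ℕ) (k : ℤ) : RatFunc ℚ :=
  if 0 ≤ k then ∏ i ∈ Finset.range k.toNat, fp (n - i) / fp (i + 1) else 0

/-- The exponent `e(n,i,j) = n(i+j+1) + C(i,2) + C(j,2) + 1`. -/
def e (n i j : ℕ) : ℕ := n * (i + j + 1) + Nat.choose i 2 + Nat.choose j 2 + 1

open Finset Polynomial

theorem cauchy_orth {F : Type*} [Field F] (n : ℕ) (A B : ℕ → F)
    (hA : ∀ k ∈ Finset.range n, ∀ m ∈ Finset.range n, k ≠ m → A k ≠ A m)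
    (hB : ∀ k ∈ Finset.range n, ∀ m ∈ Finset.range n, k ≠ m → B k ≠ B m)
    (hAB : ∀ k ∈ Finset.range n, ∀ m ∈ Finset.range n, A k ≠ B m)
    (k i : ℕ) (hk : k ∈ Finset.range n) (hi : i ∈ Finset.range n) :
    ∑ j ∈ Finset.range n, (A k - B j)⁻¹ *
      ((∏ m ∈ Finset.range n, (A i - B m)) * (∏ m ∈ (Finset.range n).erase i, (B j - A m)) *
       (∏ m ∈ (Finset.range n).erase j, (B j - B m))⁻¹ *
       (∏ m ∈ (Finset.range n).erase i, (A i - A m))⁻¹) =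
    if k = i then 1 else 0 := by
  have hBinj : Set.InjOn B (Finset.range n) := by
    intro a ha b hb hab
    by_contra hne
    exact hB a (by simpa using ha) b (by simpa using hb) hne hab
  set f : F[X] := ∏ m ∈ (Finset.range n).erase i, (X - C (A m)) with hf
  have hfm : f.Monic := monic_prod_of_monic _ _ (fun m _ => monic_X_sub_C _)
  have hdeg : f.degree < (Finset.range n).card := by
    have h1 : f.natDegree = ((Finset.range n).erase i).card := by
      rw [hf, natDegree_prod_of_monic _ _ (fun m _ => monic_X_sub_C _)]
      simp [natDegree_X_sub_C]
    have h2 : ((Finset.range n).erase i).card < (Finset.range n).card := by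
      apply Finset.card_erase_lt_of_mem hi
    calc f.degree ≤ f.natDegree := degree_le_natDegree
      _ = (((Finset.range n).erase i).card : WithBot ℕ) := by exact_mod_cast h1
      _ < ((Finset.range n).card : WithBot ℕ) := by exact_mod_cast h2
  have key := Lagrange.eq_interpolate (v := B) (s := Finset.range n) hBinj hdeg
  have keval := congrArg (eval (A k)) key
  rw [Lagrange.interpolate_apply, eval_finset_sum] at keval
  have hevalf : ∀ z : F, eval z f = ∏ m ∈ (Finset.range n).erase i, (z - A m) := by
    intro z; rw [hf, eval_prod]; simp
  have hbasis : ∀ j ∈ Finset.range n,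
      eval (A k) (C (eval (B j) f) * Lagrange.basis (Finset.range n) B j) =
      (∏ m ∈ (Finset.range n).erase i, (B j - A m)) *
        ((∏ m ∈ (Finset.range n).erase j, (B j - B m))⁻¹ *
         ∏ m ∈ (Finset.range n).erase j, (A k - B m)) := by
    intro j hj
    rw [eval_mul, eval_C, hevalf, Lagrange.basis, eval_prod]
    congr 1
    rw [← Finset.prod_inv_distrib, ← Finset.prod_mul_distrib]
    apply Finset.prod_congr rfl
    intro m hm
    simp [Lagrange.basisDivisor]
  rw [Finset.sum_congr rfl hbasis, hevalf] at keval
  -- keval : ∏ m ∈ erase i, (A k - A m) = ∑ j, ...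
  have hPk : ∀ j ∈ Finset.range n,
      ∏ m ∈ (Finset.range n).erase j, (A k - B m) =
      (A k - B j)⁻¹ * ∏ m ∈ Finset.range n, (A k - B m) := by
    intro j hj
    rw [← Finset.mul_prod_erase _ _ hj]
    have : A k - B j ≠ 0 := sub_ne_zero.2 (hAB k hk j hj)
    field_simp
  have hQi : (∏ m ∈ (Finset.range n).erase i, (A i - A m)) ≠ 0 := by
    apply Finset.prod_ne_zero_iff.2
    intro m hm
    rcases Finset.mem_erase.1 hm with ⟨hmi, hmr⟩
    exact sub_ne_zero.2 (hA i hi m hmr (Ne.symm hmi))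
  have hPi : (∏ m ∈ Finset.range n, (A i - B m)) ≠ 0 := by
    apply Finset.prod_ne_zero_iff.2
    intro m hm; exact sub_ne_zero.2 (hAB i hi m hm)
  have hPkne : (∏ m ∈ Finset.range n, (A k - B m)) ≠ 0 := by
    apply Finset.prod_ne_zero_iff.2
    intro m hm; exact sub_ne_zero.2 (hAB k hk m hm)
  have step : ∑ j ∈ Finset.range n, (A k - B j)⁻¹ *
      ((∏ m ∈ Finset.range n, (A i - B m)) * (∏ m ∈ (Finset.range n).erase i, (B j - A m)) *
       (∏ m ∈ (Finset.range n).erase j, (B j - B m))⁻¹ *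
       (∏ m ∈ (Finset.range n).erase i, (A i - A m))⁻¹) =
      ((∏ m ∈ Finset.range n, (A i - B m)) * (∏ m ∈ Finset.range n, (A k - B m))⁻¹ *
       (∏ m ∈ (Finset.range n).erase i, (A i - A m))⁻¹) *
      ∑ j ∈ Finset.range n,
        (∏ m ∈ (Finset.range n).erase i, (B j - A m)) *
          ((∏ m ∈ (Finset.range n).erase j, (B j - B m))⁻¹ *
           ∏ m ∈ (Finset.range n).erase j, (A k - B m)) := by
    rw [Finset.mul_sum]
    apply Finset.sum_congr rfl
    intro j hj
    rw [hPk j hj]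
    have hDj : (∏ m ∈ (Finset.range n).erase j, (B j - B m)) ≠ 0 := by
      apply Finset.prod_ne_zero_iff.2
      intro m hm
      rcases Finset.mem_erase.1 hm with ⟨hmj, hmr⟩
      exact sub_ne_zero.2 (hB j hj m hmr (Ne.symm hmj))
    have hABj : A k - B j ≠ 0 := sub_ne_zero.2 (hAB k hk j hj)
    field_simp
  rw [step, ← keval]
  by_cases hki : k = i
  · subst hki
    rw [if_pos rfl]
    field_simp
  · rw [if_neg hki]
    have : ∏ m ∈ (Finset.range n).erase i, (A k - A m) = 0 := by
      apply Finset.prod_eq_zero (Finset.mem_erase.2 ⟨hki, hk⟩)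
      simp
    rw [this, mul_zero]


noncomputable def fq (m : ℕ) : Polynomial ℚ := (fibPoly m).map (Int.castRingHom ℚ)

lemma fq_zero : fq 0 = 0 := by simp [fq, fibPoly]
lemma fq_one : fq 1 = 1 := by simp [fq, fibPoly]
lemma fq_add_two (m : ℕ) : fq (m + 2) = X * fq (m + 1) + fq m := by
  unfold fq
  rw [show fibPoly (m+2) = Polynomial.X * fibPoly (m + 1) + fibPoly m from rfl]
  simp [Polynomial.map_add, Polynomial.map_mul]

lemma fq_eval_one : ∀ m, (fq m).eval 1 = (Nat.fib m : ℚ) := by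
  intro m
  induction m using Nat.twoStepInduction with
  | zero => simp [fq_zero]
  | one => simp [fq_one]
  | more m ih1 ih2 =>
    rw [fq_add_two, Nat.fib_add_two]
    simp [ih1, ih2]
    ring

lemma fq_ne_zero (m : ℕ) (hm : 1 ≤ m) : fq m ≠ 0 := by
  intro h
  have h1 := fq_eval_one m
  rw [h] at h1
  simp at h1
  exact absurd h1.symm (by exact_mod_cast (Nat.fib_pos.2 hm).ne')

lemma fp_eq (m : ℕ) : fp m = algebraMap (Polynomial ℚ) (RatFunc ℚ) (fq m) := rfl

lemma fp_ne_zero (m : ℕ) (hm : 1 ≤ m) : fp m ≠ 0 := by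
  rw [fp_eq]
  intro h
  exact fq_ne_zero m hm (IsFractionRing.injective (Polynomial ℚ) (RatFunc ℚ) (by simpa using h))

noncomputable abbrev Fcl : Type := AlgebraicClosure (RatFunc ℚ)

noncomputable def xF : Fcl := algebraMap (RatFunc ℚ) Fcl (algebraMap (Polynomial ℚ) (RatFunc ℚ) X)

lemma exists_alpha : ∃ a : Fcl, a ^ 2 = xF * a + 1 := by
  obtain ⟨a, ha⟩ := IsAlgClosed.exists_root (k := Fcl) (X ^ 2 - C xF * X - 1) (by
    have : (X ^ 2 - C xF * X - 1 : Fcl[X]).degree = 2 := by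
      compute_degree!
    rw [this]; decide)
  refine ⟨a, ?_⟩
  have h1 := ha
  simp [IsRoot, eval_sub, eval_pow, eval_mul] at h1
  linear_combination h1

noncomputable def α : Fcl := exists_alpha.choose
lemma α_sq : α ^ 2 = xF * α + 1 := exists_alpha.choose_spec
noncomputable def β : Fcl := xF - α
lemma hαβ : α * β = -1 := by unfold β; linear_combination (-1 : Fcl) * α_sq
lemma hx_eq : xF = α + β := by unfold β; ring
lemma α_ne : α ≠ 0 := by
  intro h
  have := hαβ
  rw [h] at this
  simp at this
lemma β_ne : β ≠ 0 := by
  intro h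
  have := hαβ
  rw [h] at this
  simp at this

noncomputable def Dd : Fcl := α - β

noncomputable def fpF (m : ℕ) : Fcl := algebraMap (RatFunc ℚ) Fcl (fp m)

lemma fpF_zero : fpF 0 = 0 := by simp [fpF, fp_eq, fq_zero]
lemma fpF_one : fpF 1 = 1 := by simp [fpF, fp_eq, fq_one]
lemma fpF_add_two (m : ℕ) : fpF (m + 2) = xF * fpF (m + 1) + fpF m := by
  simp only [fpF, fp_eq, fq_add_two, map_add, map_mul, xF]

lemma fpF_ne_zero (m : ℕ) (hm : 1 ≤ m) : fpF m ≠ 0 := by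
  simp only [fpF]
  intro h
  exact fp_ne_zero m hm ((algebraMap (RatFunc ℚ) Fcl).injective (by simpa using h))

lemma binet : ∀ m, fpF m * Dd = α ^ m - β ^ m := by
  intro m
  induction m using Nat.twoStepInduction with
  | zero => simp [fpF_zero]
  | one => simp [fpF_one, Dd]
  | more m ih1 ih2 =>
    rw [fpF_add_two, hx_eq]
    linear_combination (α + β) * ih2 + ih1 + (α ^ m - β ^ m) * hαβ

lemma Dd_ne : Dd ≠ 0 := by
  intro h
  have h2 : xF ^ 2 + 4 = 0 := by
    have : Dd ^ 2 = xF ^ 2 + 4 := by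
      unfold Dd
      rw [hx_eq]
      linear_combination (-4 : Fcl) * hαβ
    rw [h] at this
    simpa using this.symm
  have h3 : (algebraMap (RatFunc ℚ) Fcl)
      (algebraMap (Polynomial ℚ) (RatFunc ℚ) (X ^ 2 + 4)) = 0 := by
    have h5 : (algebraMap (RatFunc ℚ) Fcl) ((algebraMap (Polynomial ℚ) (RatFunc ℚ)) 4) = 4 := by
      rw [map_ofNat, map_ofNat]
    rw [map_add, map_pow, map_add, map_pow, h5]
    simpa [xF] using h2
  have h4 : (X ^ 2 + 4 : Polynomial ℚ) = 0 := by
    apply IsFractionRing.injective (Polynomial ℚ) (RatFunc ℚ)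
    apply (algebraMap (RatFunc ℚ) Fcl).injective
    simpa using h3
  have := congrArg (Polynomial.eval 0) h4
  simp at this

noncomputable def aa (n m : ℕ) : Fcl := (-1) ^ m * α ^ (2*n + 2*m)
noncomputable def bb (n m : ℕ) : Fcl := -((-1) ^ m * α ^ (2*n + 2 - 2*m))

lemma L_ab (n i m : ℕ) (hi : 1 ≤ i) (hm : 1 ≤ m) (hmn : m ≤ n) :
    aa n i - bb n m = (-1) ^ i * α ^ (2*n + i + 1 - m) * Dd * fpF (i + m - 1) := by
  obtain ⟨i', rfl⟩ : ∃ i', i = i' + 1 := ⟨i - 1, by omega⟩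
  obtain ⟨d, rfl⟩ : ∃ d, n = m + d := ⟨n - m, by omega⟩
  have e1 : 2*(m+d) + (i'+1) + 1 - m = m + 2*d + i' + 2 := by omega
  have e2 : i' + 1 + m - 1 = i' + m := by omega
  have e3 : 2*(m+d) + 2 - 2*m = 2*d + 2 := by omega
  rw [e1, e2]
  unfold aa bb
  rw [e3]
  have hb := binet (i' + m)
  have hab : α ^ (i'+m) * β ^ (i'+m) = (-1 : Fcl) ^ (i'+m) := by
    rw [← mul_pow, hαβ]
  have hsq : ((-1 : Fcl) ^ i') * ((-1 : Fcl) ^ i') = 1 := by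
    rw [← pow_add, ← two_mul, pow_mul, neg_one_sq, one_pow]
  linear_combination (-(-1:Fcl)^(i'+1) * α^(m+2*d+i'+2)) * hb +
    ((-1:Fcl)^(i'+1) * α^(2*d+2)) * hab + (-(-1:Fcl)^m * α^(2*d+2)) * hsq

lemma L_aa (n i m : ℕ) (hmi : m < i) :
    aa n i - aa n m = (-1) ^ i * α ^ (2*n + i + m) * Dd * fpF (i - m) := by
  obtain ⟨t, rfl⟩ : ∃ t, i = m + t + 1 := ⟨i - m - 1, by omega⟩
  have e1 : m + t + 1 - m = t + 1 := by omega
  rw [e1]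
  unfold aa
  have hb := binet (t + 1)
  have hab : α ^ (t+1) * β ^ (t+1) = (-1 : Fcl) ^ (t+1) := by
    rw [← mul_pow, hαβ]
  have hsq : ((-1 : Fcl) ^ (t+1)) * ((-1 : Fcl) ^ (t+1)) = 1 := by
    rw [← pow_add, ← two_mul, pow_mul, neg_one_sq, one_pow]
  linear_combination (-(-1:Fcl)^(m+t+1) * α^(2*n+(m+t+1)+m)) * hb +
    ((-1:Fcl)^(m+t+1) * α^(2*n+2*m)) * hab + ((-1:Fcl)^m * α^(2*n+2*m)) * hsq

lemma L_bb (n j m : ℕ) (hmj : m < j) (hjn : j ≤ n) :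
    bb n j - bb n m = (-1) ^ m * α ^ (2*n + 2 - j - m) * Dd * fpF (j - m) := by
  obtain ⟨t, rfl⟩ : ∃ t, j = m + t + 1 := ⟨j - m - 1, by omega⟩
  obtain ⟨s, rfl⟩ : ∃ s, n = m + t + 1 + s := ⟨n - (m+t+1), by omega⟩
  have e1 : m + t + 1 - m = t + 1 := by omega
  have e2 : 2*(m+t+1+s) + 2 - (m+t+1) - m = t + 2*s + 3 := by omega
  have e3 : 2*(m+t+1+s) + 2 - 2*(m+t+1) = 2*s + 2 := by omega
  have e4 : 2*(m+t+1+s) + 2 - 2*m = 2*t + 2*s + 4 := by omega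
  rw [e1, e2]
  unfold bb
  rw [e3, e4]
  have hb := binet (t + 1)
  have hab : α ^ (t+1) * β ^ (t+1) = (-1 : Fcl) ^ (t+1) := by
    rw [← mul_pow, hαβ]
  linear_combination (-(-1:Fcl)^m * α^(t+2*s+3)) * hb + ((-1:Fcl)^m * α^(2*s+2)) * hab

noncomputable def ζ (s t : ℤ) : Fcl := (-1) ^ s * α ^ t

lemma neg_one_ne : (-1 : Fcl) ≠ 0 := by norm_num

lemma ζ_mul (s t u v : ℤ) : ζ s t * ζ u v = ζ (s+u) (t+v) := by
  unfold ζ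
  rw [zpow_add₀ neg_one_ne, zpow_add₀ α_ne]
  ring

lemma ζ_inv (s t : ℤ) : (ζ s t)⁻¹ = ζ (-s) (-t) := by
  unfold ζ
  rw [zpow_neg, zpow_neg, mul_inv]

lemma ζ_ne (s t : ℤ) : ζ s t ≠ 0 :=
  mul_ne_zero (zpow_ne_zero _ neg_one_ne) (zpow_ne_zero _ α_ne)

lemma ζ_zero : ζ 0 0 = 1 := by simp [ζ]

lemma ζ_nat (s t : ℕ) : (-1 : Fcl) ^ s * α ^ t = ζ s t := by
  simp [ζ, zpow_natCast]

lemma ζ_neg (s t : ℤ) : -ζ s t = ζ (s+1) t := by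
  unfold ζ
  rw [zpow_add₀ neg_one_ne, zpow_one]
  ring

lemma ζ_congr {s t u v : ℤ} (h : 2 ∣ s - u) (ht : t = v) : ζ s t = ζ u v := by
  obtain ⟨c, hc⟩ := h
  have hs : s = u + 2 * c := by omega
  subst hs ht
  unfold ζ
  congr 1
  rw [zpow_add₀ neg_one_ne]
  have : (-1 : Fcl) ^ (2*c) = 1 := by
    rw [zpow_mul]
    norm_num
  rw [this, mul_one]

lemma ζ_prod {s : Finset ℕ} (f g : ℕ → ℤ) :
    ∏ m ∈ s, ζ (f m) (g m) = ζ (∑ m ∈ s, f m) (∑ m ∈ s, g m) := by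
  induction s using Finset.cons_induction with
  | empty => simp [ζ_zero]
  | cons a s ha ih =>
    rw [Finset.prod_cons, Finset.sum_cons, Finset.sum_cons, ih, ζ_mul]

noncomputable def AF (n m : ℕ) : Fcl := aa n (m+1)
noncomputable def BF (n m : ℕ) : Fcl := bb n (m+1)

lemma Zab {n k m : ℕ} (hm : m < n) :
    AF n k - BF n m = ζ (k+1) (2*(n:ℤ)+k+1-m) * Dd * fpF (k+m+1) := by
  unfold AF BF
  rw [L_ab n (k+1) (m+1) (by omega) (by omega) (by omega)]
  have h1 : 2*n + (k+1) + 1 - (m+1) = 2*n+k+1-m := by omega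
  rw [h1, ζ_nat]
  have h2 : ((2*n+k+1-m : ℕ) : ℤ) = 2*(n:ℤ)+k+1-m := by omega
  have h3 : (k+1) + (m+1) - 1 = k+m+1 := by omega
  rw [h2, h3]
  norm_cast

lemma ZBA {n j m : ℕ} (hm : m < n) (hj : j < n) :
    BF n j - AF n m = ζ (m+2) (2*(n:ℤ)+m+1-j) * Dd * fpF (m+j+1) := by
  have h := Zab (n := n) (k := m) (m := j) hj
  have : BF n j - AF n m = -(AF n m - BF n j) := by ring
  rw [this, h]
  rw [show -(ζ ((m:ℤ)+1) (2*(n:ℤ)+m+1-j) * Dd * fpF (m+j+1)) =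
    (-ζ ((m:ℤ)+1) (2*(n:ℤ)+m+1-j)) * Dd * fpF (m+j+1) by ring, ζ_neg,
    show ((m:ℤ)+1+1) = (m:ℤ)+2 by ring]

lemma Zaa {n k m : ℕ} (hmk : m < k) :
    AF n k - AF n m = ζ (k+1) (2*(n:ℤ)+k+m+2) * Dd * fpF (k-m) := by
  unfold AF
  rw [L_aa n (k+1) (m+1) (by omega)]
  have h1 : k + 1 - (m+1) = k - m := by omega
  rw [h1, ζ_nat]
  have h2 : ((2*n+(k+1)+(m+1) : ℕ) : ℤ) = 2*(n:ℤ)+k+m+2 := by push_cast; ring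
  rw [h2]
  norm_cast

lemma Zaa' {n k m : ℕ} (hkm : k < m) :
    AF n k - AF n m = ζ (m+2) (2*(n:ℤ)+k+m+2) * Dd * fpF (m-k) := by
  have h := Zaa (n := n) (hmk := hkm)
  have h0 : AF n k - AF n m = -(AF n m - AF n k) := by ring
  rw [h0, h]
  rw [show -(ζ ((m:ℤ)+1) (2*(n:ℤ)+m+k+2) * Dd * fpF (m-k)) =
    (-ζ ((m:ℤ)+1) (2*(n:ℤ)+m+k+2)) * Dd * fpF (m-k) by ring, ζ_neg]
  rw [show 2*(n:ℤ)+m+k+2 = 2*(n:ℤ)+k+m+2 by ring,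
    show ((m:ℤ)+1+1) = (m:ℤ)+2 by ring]

lemma Zbb {n j m : ℕ} (hmj : m < j) (hjn : j < n) :
    BF n j - BF n m = ζ (m+1) (2*(n:ℤ)-j-m) * Dd * fpF (j-m) := by
  unfold BF
  rw [L_bb n (j+1) (m+1) (by omega) (by omega)]
  have h1 : j + 1 - (m+1) = j - m := by omega
  have h0 : 2*n + 2 - (j+1) - (m+1) = 2*n-j-m := by omega
  rw [h1, h0, ζ_nat]
  have h2 : ((2*n-j-m : ℕ) : ℤ) = 2*(n:ℤ)-j-m := by omega
  rw [h2]
  norm_cast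

lemma Zbb' {n j m : ℕ} (hjm : j < m) (hmn : m < n) :
    BF n j - BF n m = ζ (j+2) (2*(n:ℤ)-j-m) * Dd * fpF (m-j) := by
  have h := Zbb (n := n) hjm hmn
  have h0 : BF n j - BF n m = -(BF n m - BF n j) := by ring
  rw [h0, h]
  rw [show -(ζ ((j:ℤ)+1) (2*(n:ℤ)-m-j) * Dd * fpF (m-j)) =
    (-ζ ((j:ℤ)+1) (2*(n:ℤ)-m-j)) * Dd * fpF (m-j) by ring, ζ_neg]
  rw [show 2*(n:ℤ)-m-j = 2*(n:ℤ)-j-m by ring,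
    show ((j:ℤ)+1+1) = (j:ℤ)+2 by ring]

noncomputable def ΦF (t : ℕ) : Fcl := ∏ s ∈ Finset.range t, fpF (s+1)

lemma ΦF_ne (t : ℕ) : ΦF t ≠ 0 := by
  apply Finset.prod_ne_zero_iff.2
  intro s _
  exact fpF_ne_zero _ (by omega)

noncomputable def Gs (k : ℕ) : ℤ := ∑ m ∈ Finset.range k, (m : ℤ)

lemma Gs_two (k : ℕ) : 2 * Gs k = k * (k - 1) := by
  unfold Gs
  induction k with
  | zero => simp
  | succ k ih =>
    rw [Finset.sum_range_succ]
    push_cast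
    push_cast at ih
    ring_nf
    ring_nf at ih
    omega

lemma prod_zform {s : Finset ℕ} (f : ℕ → Fcl) (sg ex : ℕ → ℤ) (g : ℕ → ℕ)
    (h : ∀ m ∈ s, f m = ζ (sg m) (ex m) * Dd * fpF (g m)) :
    ∏ m ∈ s, f m =
      ζ (∑ m ∈ s, sg m) (∑ m ∈ s, ex m) * Dd ^ s.card * ∏ m ∈ s, fpF (g m) := by
  rw [Finset.prod_congr rfl h, Finset.prod_mul_distrib, Finset.prod_mul_distrib, ζ_prod,
    Finset.prod_const]

lemma prod_lower (i0 : ℕ) : ∏ m ∈ Finset.range i0, fpF (i0 - m) = ΦF i0 := by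
  have h := Finset.prod_range_reflect (fun j => fpF (j+1)) i0
  unfold ΦF
  rw [← h]
  apply Finset.prod_congr rfl
  intro m hm
  simp only [Finset.mem_range] at hm
  congr 1
  omega

lemma prod_upper (i0 n : ℕ) (h : i0 < n) :
    ∏ m ∈ Finset.Ico (i0+1) n, fpF (m - i0) = ΦF (n - 1 - i0) := by
  rw [Finset.prod_Ico_eq_prod_range]
  have h1 : n - (i0+1) = n - 1 - i0 := by omega
  rw [h1]
  apply Finset.prod_congr rfl
  intro m _
  congr 1
  omega

lemma ΦF_add (c t : ℕ) : ΦF (c + t) = ΦF c * ∏ m ∈ Finset.range t, fpF (c+m+1) := by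
  unfold ΦF
  rw [Finset.prod_range_add]

lemma prod_erase_split {M : Type*} [CommMonoid M] {i0 n : ℕ} (h : i0 < n) (f : ℕ → M) :
    ∏ m ∈ (Finset.range n).erase i0, f m =
      (∏ m ∈ Finset.range i0, f m) * ∏ m ∈ Finset.Ico (i0+1) n, f m := by
  rw [← Finset.prod_union (by
    simp only [Finset.disjoint_left, Finset.mem_range, Finset.mem_Ico]
    omega)]
  apply Finset.prod_congr _ (fun _ _ => rfl)
  ext m
  simp only [Finset.mem_erase, Finset.mem_range, Finset.mem_union, Finset.mem_Ico]
  omega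

lemma sum_Ico_cast (a n : ℕ) (h : a ≤ n) :
    ∑ m ∈ Finset.Ico a n, (m:ℤ) = Gs n - Gs a := by
  exact Finset.sum_Ico_eq_sub _ h

lemma Gs_succ (k : ℕ) : Gs (k+1) = Gs k + k := by
  unfold Gs
  rw [Finset.sum_range_succ]

lemma prod_PAB (n i0 : ℕ) :
    ∏ m ∈ Finset.range n, (AF n i0 - BF n m) =
      ζ (n*((i0:ℤ)+1)) (n*(2*(n:ℤ)+i0+1) - Gs n) * Dd ^ n *
        ∏ m ∈ Finset.range n, fpF (i0+m+1) := by
  have h := prod_zform (s := Finset.range n) (fun m => AF n i0 - BF n m)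
      (fun _ => (i0:ℤ)+1) (fun m => 2*(n:ℤ)+i0+1-m) (fun m => i0+m+1)
      (fun m hm => Zab (Finset.mem_range.1 hm))
  rw [h, Finset.card_range]
  have hs : ∑ _m ∈ Finset.range n, ((i0:ℤ)+1) = n*((i0:ℤ)+1) := by
    rw [Finset.sum_const, Finset.card_range, nsmul_eq_mul]
  have ht : ∑ m ∈ Finset.range n, (2*(n:ℤ)+i0+1-m) = n*(2*(n:ℤ)+i0+1) - Gs n := by
    rw [Finset.sum_sub_distrib, Finset.sum_const, Finset.card_range, nsmul_eq_mul]
    unfold Gs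
    ring
  rw [hs, ht]

lemma prod_EBA (n i0 j0 : ℕ) (hi : i0 < n) (hj : j0 < n) :
    ∏ m ∈ (Finset.range n).erase i0, (BF n j0 - AF n m) =
      ζ (Gs n + 2*(n:ℤ) - (i0+2)) (n*(2*(n:ℤ)+1-j0) + Gs n - (2*(n:ℤ)+1-j0+i0)) *
        Dd ^ (n-1) * ∏ m ∈ (Finset.range n).erase i0, fpF (m+j0+1) := by
  have hio : i0 ∈ Finset.range n := Finset.mem_range.2 hi
  have h := prod_zform (s := (Finset.range n).erase i0) (fun m => BF n j0 - AF n m)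
      (fun m => (m:ℤ)+2) (fun m => 2*(n:ℤ)+m+1-j0) (fun m => m+j0+1)
      (fun m hm => ZBA (Finset.mem_range.1 (Finset.mem_of_mem_erase hm)) hj)
  rw [h, Finset.card_erase_of_mem hio, Finset.card_range]
  have hs : ∑ m ∈ (Finset.range n).erase i0, ((m:ℤ)+2) = Gs n + 2*(n:ℤ) - (i0+2) := by
    rw [Finset.sum_erase_eq_sub hio, Finset.sum_add_distrib, Finset.sum_const,
      Finset.card_range, nsmul_eq_mul]
    unfold Gs
    ring
  have ht : ∑ m ∈ (Finset.range n).erase i0, (2*(n:ℤ)+m+1-j0) =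
      n*(2*(n:ℤ)+1-j0) + Gs n - (2*(n:ℤ)+1-j0+i0) := by
    rw [Finset.sum_erase_eq_sub hio]
    have hre : ∀ m ∈ Finset.range n, 2*(n:ℤ)+m+1-j0 = (2*(n:ℤ)+1-j0) + m := fun m _ => by ring
    rw [Finset.sum_congr rfl hre, Finset.sum_add_distrib, Finset.sum_const,
      Finset.card_range, nsmul_eq_mul]
    unfold Gs
    ring
  rw [hs, ht]

lemma prod_Aden (n i0 : ℕ) (hi : i0 < n) :
    ∏ m ∈ (Finset.range n).erase i0, (AF n i0 - AF n m) =
      ζ (i0*((i0:ℤ)+1) + (Gs n - Gs i0 - i0) + 2*((n:ℤ)-1-i0))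
        (((n:ℤ)-1)*(2*(n:ℤ)+i0+2) + Gs n - i0) *
        Dd ^ (n-1) * (ΦF i0 * ΦF (n-1-i0)) := by
  rw [prod_erase_split hi]
  have hlow := prod_zform (s := Finset.range i0) (fun m => AF n i0 - AF n m)
      (fun _ => (i0:ℤ)+1) (fun m => 2*(n:ℤ)+i0+m+2) (fun m => i0 - m)
      (fun m hm => Zaa (Finset.mem_range.1 hm))
  have hup := prod_zform (s := Finset.Ico (i0+1) n) (fun m => AF n i0 - AF n m)
      (fun m => (m:ℤ)+2) (fun m => 2*(n:ℤ)+i0+m+2) (fun m => m - i0)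
      (fun m hm => Zaa' (by have := (Finset.mem_Ico.1 hm).1; omega))
  rw [hlow, hup, prod_lower, prod_upper i0 n hi, Finset.card_range, Nat.card_Ico]
  have hc : ((n - (i0+1) : ℕ) : ℤ) = (n:ℤ)-1-i0 := by omega
  have hs1 : ∑ _m ∈ Finset.range i0, ((i0:ℤ)+1) = i0*((i0:ℤ)+1) := by
    rw [Finset.sum_const, Finset.card_range, nsmul_eq_mul]
  have ht1 : ∑ m ∈ Finset.range i0, (2*(n:ℤ)+i0+m+2) = i0*(2*(n:ℤ)+i0+2) + Gs i0 := by
    have hre : ∀ m ∈ Finset.range i0, 2*(n:ℤ)+i0+m+2 = (2*(n:ℤ)+i0+2) + m := fun m _ => by ring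
    rw [Finset.sum_congr rfl hre, Finset.sum_add_distrib, Finset.sum_const,
      Finset.card_range, nsmul_eq_mul]
    unfold Gs
    ring
  have hs2 : ∑ m ∈ Finset.Ico (i0+1) n, ((m:ℤ)+2) = (Gs n - Gs i0 - i0) + 2*((n:ℤ)-1-i0) := by
    rw [Finset.sum_add_distrib, Finset.sum_const, Nat.card_Ico, nsmul_eq_mul,
      sum_Ico_cast _ _ (by omega), Gs_succ, hc]
    ring
  have ht2 : ∑ m ∈ Finset.Ico (i0+1) n, (2*(n:ℤ)+i0+m+2) =
      ((n:ℤ)-1-i0)*(2*(n:ℤ)+i0+2) + (Gs n - Gs i0 - i0) := by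
    have hre : ∀ m ∈ Finset.Ico (i0+1) n, 2*(n:ℤ)+i0+m+2 = (2*(n:ℤ)+i0+2) + m :=
      fun m _ => by ring
    rw [Finset.sum_congr rfl hre, Finset.sum_add_distrib, Finset.sum_const, Nat.card_Ico,
      nsmul_eq_mul, sum_Ico_cast _ _ (by omega), Gs_succ, hc]
    ring
  rw [hs1, ht1, hs2, ht2]
  rw [show ζ (i0*((i0:ℤ)+1)) (i0*(2*(n:ℤ)+i0+2) + Gs i0) * Dd ^ i0 * ΦF i0 *
      (ζ ((Gs n - Gs i0 - i0) + 2*((n:ℤ)-1-i0)) (((n:ℤ)-1-i0)*(2*(n:ℤ)+i0+2) + (Gs n - Gs i0 - i0)) *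
        Dd ^ (n-(i0+1)) * ΦF (n-1-i0)) =
    (ζ (i0*((i0:ℤ)+1)) (i0*(2*(n:ℤ)+i0+2) + Gs i0) *
      ζ ((Gs n - Gs i0 - i0) + 2*((n:ℤ)-1-i0)) (((n:ℤ)-1-i0)*(2*(n:ℤ)+i0+2) + (Gs n - Gs i0 - i0))) *
      (Dd ^ i0 * Dd ^ (n-(i0+1))) * (ΦF i0 * ΦF (n-1-i0)) by ring]
  rw [ζ_mul, ← pow_add, show i0 + (n-(i0+1)) = n - 1 by omega]
  congr 2 <;> ring

lemma prod_Bden (n j0 : ℕ) (hj : j0 < n) :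
    ∏ m ∈ (Finset.range n).erase j0, (BF n j0 - BF n m) =
      ζ (Gs j0 + j0 + ((n:ℤ)-1-j0)*((j0:ℤ)+2)) (((n:ℤ)-1)*(2*(n:ℤ)-j0) - (Gs n - j0)) *
        Dd ^ (n-1) * (ΦF j0 * ΦF (n-1-j0)) := by
  rw [prod_erase_split hj]
  have hlow := prod_zform (s := Finset.range j0) (fun m => BF n j0 - BF n m)
      (fun m => (m:ℤ)+1) (fun m => 2*(n:ℤ)-j0-m) (fun m => j0 - m)
      (fun m hm => Zbb (Finset.mem_range.1 hm) hj)
  have hup := prod_zform (s := Finset.Ico (j0+1) n) (fun m => BF n j0 - BF n m)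
      (fun _ => (j0:ℤ)+2) (fun m => 2*(n:ℤ)-j0-m) (fun m => m - j0)
      (fun m hm => Zbb' (by have := (Finset.mem_Ico.1 hm).1; omega)
        (by have := (Finset.mem_Ico.1 hm).2; omega))
  rw [hlow, hup, prod_lower, prod_upper j0 n hj, Finset.card_range, Nat.card_Ico]
  have hc : ((n - (j0+1) : ℕ) : ℤ) = (n:ℤ)-1-j0 := by omega
  have hs1 : ∑ m ∈ Finset.range j0, ((m:ℤ)+1) = Gs j0 + j0 := by
    rw [Finset.sum_add_distrib, Finset.sum_const, Finset.card_range, nsmul_eq_mul]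
    unfold Gs
    ring
  have ht1 : ∑ m ∈ Finset.range j0, (2*(n:ℤ)-j0-m) = j0*(2*(n:ℤ)-j0) - Gs j0 := by
    have hre : ∀ m ∈ Finset.range j0, 2*(n:ℤ)-j0-m = (2*(n:ℤ)-j0) - m := fun m _ => by ring
    rw [Finset.sum_congr rfl hre, Finset.sum_sub_distrib, Finset.sum_const,
      Finset.card_range, nsmul_eq_mul]
    unfold Gs
    ring
  have hs2 : ∑ _m ∈ Finset.Ico (j0+1) n, ((j0:ℤ)+2) = ((n:ℤ)-1-j0)*((j0:ℤ)+2) := by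
    rw [Finset.sum_const, Nat.card_Ico, nsmul_eq_mul, hc]
  have ht2 : ∑ m ∈ Finset.Ico (j0+1) n, (2*(n:ℤ)-j0-m) =
      ((n:ℤ)-1-j0)*(2*(n:ℤ)-j0) - (Gs n - Gs j0 - j0) := by
    have hre : ∀ m ∈ Finset.Ico (j0+1) n, 2*(n:ℤ)-j0-m = (2*(n:ℤ)-j0) - m := fun m _ => by ring
    rw [Finset.sum_congr rfl hre, Finset.sum_sub_distrib, Finset.sum_const, Nat.card_Ico,
      nsmul_eq_mul, sum_Ico_cast _ _ (by omega), Gs_succ, hc]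
    ring
  rw [hs1, ht1, hs2, ht2]
  rw [show ζ (Gs j0 + j0) (j0*(2*(n:ℤ)-j0) - Gs j0) * Dd ^ j0 * ΦF j0 *
      (ζ (((n:ℤ)-1-j0)*((j0:ℤ)+2)) (((n:ℤ)-1-j0)*(2*(n:ℤ)-j0) - (Gs n - Gs j0 - j0)) *
        Dd ^ (n-(j0+1)) * ΦF (n-1-j0)) =
    (ζ (Gs j0 + j0) (j0*(2*(n:ℤ)-j0) - Gs j0) *
      ζ (((n:ℤ)-1-j0)*((j0:ℤ)+2)) (((n:ℤ)-1-j0)*(2*(n:ℤ)-j0) - (Gs n - Gs j0 - j0))) *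
      (Dd ^ j0 * Dd ^ (n-(j0+1))) * (ΦF j0 * ΦF (n-1-j0)) by ring]
  rw [ζ_mul, ← pow_add, show j0 + (n-(j0+1)) = n - 1 by omega]
  congr 2 <;> ring

lemma fibPoly_add_two (t : ℕ) : fibPoly (t+2) = X * fibPoly (t+1) + fibPoly t := rfl

lemma fibPoly_add (m : ℕ) : ∀ k, fibPoly (m + k + 1) =
    fibPoly (m+1) * fibPoly (k+1) + fibPoly m * fibPoly k := by
  intro k
  induction k using Nat.twoStepInduction with
  | zero => simp [fibPoly]
  | one =>
    show fibPoly (m + 2) = _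
    rw [fibPoly_add_two]
    show _ = fibPoly (m+1) * fibPoly 2 + fibPoly m * fibPoly 1
    rw [show fibPoly 2 = X * fibPoly 1 + fibPoly 0 from rfl]
    simp [fibPoly]
    ring
  | more k ih1 ih2 =>
    have h0 : m + (k + 2) + 1 = (m + k + 1) + 2 := by ring
    have h1 : m + (k + 1) + 1 = (m + k + 1) + 1 := by ring
    rw [h0, fibPoly_add_two, show (m+k+1)+1 = m+(k+1)+1 by ring, ih2, ih1,
      show k+1+1 = k+2 from rfl, fibPoly_add_two (k+1), fibPoly_add_two k]
    ring

noncomputable def FB : ℕ → ℕ → Polynomial ℤ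
  | _, 0 => 1
  | 0, _+1 => 0
  | (n+1), (k+1) => fibPoly (n+1-k) * FB n k + fibPoly k * FB n (k+1)

lemma FB_zero (N : ℕ) : FB N 0 = 1 := by cases N <;> rfl

lemma FB_gt : ∀ N k, N < k → FB N k = 0 := by
  intro N
  induction N with
  | zero =>
    intro k hk
    match k, hk with
    | (k+1), _ => rfl
  | succ n ih =>
    intro k hk
    match k, hk with
    | (k+1), hk =>
      show fibPoly (n+1-k) * FB n k + fibPoly k * FB n (k+1) = 0
      rw [ih k (by omega), ih (k+1) (by omega)]
      ring

noncomputable def imK (p : Polynomial ℤ) : RatFunc ℚ :=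
  algebraMap (Polynomial ℚ) (RatFunc ℚ) (p.map (Int.castRingHom ℚ))

lemma imK_mul (p q : Polynomial ℤ) : imK (p * q) = imK p * imK q := by
  unfold imK
  rw [Polynomial.map_mul, map_mul]

lemma imK_add (p q : Polynomial ℤ) : imK (p + q) = imK p + imK q := by
  unfold imK
  rw [Polynomial.map_add, map_add]

lemma imK_one : imK 1 = 1 := by unfold imK; simp

lemma imK_fib (t : ℕ) : imK (fibPoly t) = fp t := rfl

noncomputable def ΦK (t : ℕ) : RatFunc ℚ := ∏ s ∈ Finset.range t, fp (s+1)

lemma ΦK_ne (t : ℕ) : ΦK t ≠ 0 := by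
  apply Finset.prod_ne_zero_iff.2
  intro s _
  exact fp_ne_zero _ (by omega)

lemma ΦK_zero : ΦK 0 = 1 := by simp [ΦK]

lemma ΦK_succ (t : ℕ) : ΦK (t+1) = ΦK t * fp (t+1) := Finset.prod_range_succ _ t

lemma FB_spec : ∀ N k, k ≤ N → imK (FB N k) * ΦK k * ΦK (N-k) = ΦK N := by
  intro N
  induction N with
  | zero =>
    intro k hk
    interval_cases k
    simp [FB_zero, imK_one, ΦK_zero]
  | succ N ih =>
    intro k hk
    match k with
    | 0 => simp [FB_zero, imK_one, ΦK_zero]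
    | (k+1) =>
      have hkN : k ≤ N := by omega
      have hexp : imK (FB (N+1) (k+1)) =
          fp (N+1-k) * imK (FB N k) + fp k * imK (FB N (k+1)) := by
        rw [show FB (N+1) (k+1) = fibPoly (N+1-k) * FB N k + fibPoly k * FB N (k+1) from rfl,
          imK_add, imK_mul, imK_mul, imK_fib, imK_fib]
      rcases Nat.eq_or_lt_of_le hkN with heq | hlt
      · subst heq
        have h1 : imK (FB k (k+1)) = 0 := by
          rw [FB_gt k (k+1) (by omega)]
          simp [imK]
        have h3 : imK (FB k k) = 1 := by
          have h2 := ih k le_rfl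
          rw [Nat.sub_self, ΦK_zero, mul_one] at h2
          exact mul_right_cancel₀ (ΦK_ne k) (by rw [h2, one_mul])
        rw [Nat.sub_self, ΦK_zero, mul_one, hexp, h1, Nat.succ_sub le_rfl, Nat.sub_self, h3]
        rw [show fp 1 = 1 by rw [fp_eq, fq_one, map_one]]
        ring
      · have ihk := ih k hkN
        have ihk1 := ih (k+1) hlt
        have hNk : N - k = (N - k - 1) + 1 := by omega
        have hNk2 : N - (k+1) = N - k - 1 := by omega
        have hNk3 : N - k - 1 + 1 = N - k := by omega
        rw [hNk2] at ihk1
        rw [hNk, ΦK_succ, hNk3] at ihk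
        have fibadd : fp (N+1) = fp (N+1-k) * fp (k+1) + fp (N-k) * fp k := by
          have h := congrArg imK (fibPoly_add (N-k) k)
          rw [imK_add, imK_mul, imK_mul, imK_fib, imK_fib, imK_fib, imK_fib,
            show N - k + k + 1 = N + 1 by omega, show N - k + 1 = N + 1 - k by omega] at h
          exact h
        have hgoal1 : N + 1 - (k+1) = (N - k - 1) + 1 := by omega
        rw [ΦK_succ k] at ihk1
        rw [hexp, hgoal1, ΦK_succ (N-k-1), hNk3, ΦK_succ k, ΦK_succ N]
        linear_combination (fp (N+1-k) * fp (k+1)) * ihk + (fp k * fp (N-k)) * ihk1 +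
          (-ΦK N) * fibadd

lemma ΦK_add (c t : ℕ) : ΦK (c + t) = ΦK c * ∏ m ∈ Finset.range t, fp (c+m+1) := by
  unfold ΦK
  rw [Finset.prod_range_add]

lemma xfib_eq (N k : ℕ) (hk : k ≤ N) : xfibinom N (k : ℤ) = imK (FB N k) := by
  unfold xfibinom
  rw [if_pos (by exact_mod_cast Int.natCast_nonneg k), Int.toNat_natCast]
  rw [Finset.prod_div_distrib]
  have hden : (∏ i ∈ Finset.range k, fp (i+1)) = ΦK k := rfl
  have h1 : ΦK ((N-k)+k) = ΦK (N-k) * ∏ m ∈ Finset.range k, fp ((N-k)+m+1) := ΦK_add _ _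
  rw [show (N-k)+k = N by omega] at h1
  have h3 : ∏ i ∈ Finset.range k, fp (N-i) = ∏ m ∈ Finset.range k, fp ((N-k)+m+1) := by
    rw [← Finset.prod_range_reflect (fun m => fp ((N-k)+m+1)) k]
    apply Finset.prod_congr rfl
    intro m hm
    simp only [Finset.mem_range] at hm
    congr 1
    omega
  have spec := FB_spec N k hk
  rw [hden, h3, div_eq_iff (ΦK_ne k)]
  apply mul_right_cancel₀ (ΦK_ne (N-k))
  linear_combination - h1 - spec

noncomputable def φF : RatFunc ℚ →+* Fcl := algebraMap (RatFunc ℚ) Fcl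

lemma φF_fp (m : ℕ) : φF (fp m) = fpF m := rfl

lemma φF_ΦK (t : ℕ) : φF (ΦK t) = ΦF t := by
  unfold ΦK ΦF
  rw [map_prod]
  rfl

noncomputable def imF (p : Polynomial ℤ) : Fcl := φF (imK p)

lemma FB_specF (N k : ℕ) (hk : k ≤ N) : imF (FB N k) * ΦF k * ΦF (N-k) = ΦF N := by
  have := congrArg φF (FB_spec N k hk)
  rw [map_mul, map_mul, φF_ΦK, φF_ΦK, φF_ΦK] at this
  exact this

lemma xfibF (N k : ℕ) (hk : k ≤ N) :
    φF (xfibinom N (k : ℤ)) = ΦF N / (ΦF k * ΦF (N-k)) := by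
  rw [xfib_eq N k hk, show φF (imK (FB N k)) = imF (FB N k) from rfl]
  rw [eq_div_iff (mul_ne_zero (ΦF_ne k) (ΦF_ne (N-k)))]
  have := FB_specF N k hk
  rw [← this]
  ring

lemma claim2 (n i0 j0 : ℕ) (hi : i0 < n) (hj : j0 < n) :
    fpF (j0+i0+1) * φF (xfibinom (n+j0) ((n:ℤ)-1-i0)) * φF (xfibinom (n+i0) ((n:ℤ)-1-j0)) *
      φF (xfibinom (j0+i0) (j0:ℤ)) ^ 2 *
      (ΦF i0 * ΦF j0 * ΦF (n-1-i0) * ΦF (n-1-j0)) =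
    (∏ m ∈ Finset.range n, fpF (i0+m+1)) * ∏ m ∈ (Finset.range n).erase i0, fpF (m+j0+1) := by
  have hc1 : ((n:ℤ)-1-i0) = ((n-1-i0 : ℕ) : ℤ) := by omega
  have hc2 : ((n:ℤ)-1-j0) = ((n-1-j0 : ℕ) : ℤ) := by omega
  rw [hc1, hc2]
  rw [xfibF (n+j0) (n-1-i0) (by omega), xfibF (n+i0) (n-1-j0) (by omega),
      xfibF (j0+i0) j0 (by omega)]
  rw [show (n+j0) - (n-1-i0) = i0+j0+1 by omega, show (n+i0) - (n-1-j0) = i0+j0+1 by omega,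
      show (j0+i0) - j0 = i0 by omega, show j0+i0+1 = i0+j0+1 by ring,
      show j0+i0 = i0+j0 by ring]
  have hPf : (∏ m ∈ Finset.range n, fpF (i0+m+1)) = ΦF (n+i0) / ΦF i0 := by
    rw [eq_div_iff (ΦF_ne i0)]
    have h := ΦF_add i0 n
    rw [show i0 + n = n + i0 by ring] at h
    rw [h]
    ring
  have hEB : (∏ m ∈ (Finset.range n).erase i0, fpF (m+j0+1)) =
      ΦF (n+j0) / (ΦF j0 * fpF (i0+j0+1)) := by
    rw [eq_div_iff (mul_ne_zero (ΦF_ne j0) (fpF_ne_zero _ (by omega)))]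
    have h1 := Finset.mul_prod_erase (Finset.range n) (fun m => fpF (m+j0+1))
      (Finset.mem_range.2 hi)
    have h2 := ΦF_add j0 n
    rw [show j0 + n = n + j0 by ring] at h2
    have h3 : ∏ m ∈ Finset.range n, fpF (j0+m+1) = ∏ m ∈ Finset.range n, fpF (m+j0+1) :=
      Finset.prod_congr rfl (fun m _ => by rw [show j0+m+1 = m+j0+1 by ring])
    rw [h2, h3, ← h1]
    ring
  rw [hPf, hEB]
  have hsucc : ΦF (i0+j0+1) = ΦF (i0+j0) * fpF (i0+j0+1) := Finset.prod_range_succ _ _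
  rw [hsucc]
  have n1 : ΦF i0 ≠ 0 := ΦF_ne _
  have n2 : ΦF j0 ≠ 0 := ΦF_ne _
  have n3 : ΦF (n-1-i0) ≠ 0 := ΦF_ne _
  have n4 : ΦF (n-1-j0) ≠ 0 := ΦF_ne _
  have n5 : ΦF (i0+j0) ≠ 0 := ΦF_ne _
  have n6 : fpF (i0+j0+1) ≠ 0 := fpF_ne_zero _ (by omega)
  apply Eq.trans (b := (fpF (i0+j0+1) * ΦF (n+j0) * ΦF (n+i0) * ΦF (i0+j0)^2 *
      (ΦF i0 * ΦF j0 * ΦF (n-1-i0) * ΦF (n-1-j0))) /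
    ((ΦF (n-1-i0) * (ΦF (i0+j0) * fpF (i0+j0+1))) *
      (ΦF (n-1-j0) * (ΦF (i0+j0) * fpF (i0+j0+1))) * (ΦF j0 * ΦF i0)^2))
  · ring
  · rw [show ΦF (n+i0) / ΦF i0 * (ΦF (n+j0) / (ΦF j0 * fpF (i0+j0+1))) =
      (ΦF (n+i0) * ΦF (n+j0)) / (ΦF i0 * (ΦF j0 * fpF (i0+j0+1))) from by ring]
    rw [div_eq_div_iff
      (by simp [mul_ne_zero_iff, pow_ne_zero_iff, n1, n2, n3, n4, n5, n6])
      (by simp [mul_ne_zero_iff, n1, n2, n6])]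
    ring

lemma ζ_rel (n i0 j0 k0 : ℕ) :
    ζ ((k0:ℤ)+1) (2*(n:ℤ)+k0+1-j0) * ζ (e n (j0+1) (i0+1) : ℤ) 0 *
      ζ (Gs j0 + j0 + ((n:ℤ)-1-j0)*((j0:ℤ)+2)) (((n:ℤ)-1)*(2*(n:ℤ)-j0) - (Gs n - j0)) *
      ζ (i0*((i0:ℤ)+1) + (Gs n - Gs i0 - i0) + 2*((n:ℤ)-1-i0))
        (((n:ℤ)-1)*(2*(n:ℤ)+i0+2) + Gs n - i0) =
    ζ ((k0:ℤ)-i0) ((k0:ℤ)-i0) * ζ (n*((i0:ℤ)+1)) (n*(2*(n:ℤ)+i0+1) - Gs n) *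
      ζ (Gs n + 2*(n:ℤ) - (i0+2)) (n*(2*(n:ℤ)+1-j0) + Gs n - (2*(n:ℤ)+1-j0+i0)) := by
  rw [ζ_mul, ζ_mul, ζ_mul, ζ_mul, ζ_mul]
  have hGi : 2 * Gs i0 = i0 * ((i0:ℤ) - 1) := Gs_two i0
  have hGj : 2 * Gs j0 = j0 * ((j0:ℤ) - 1) := Gs_two j0
  have h2i : 2 * ((Nat.choose (i0+1) 2 : ℕ) : ℤ) = ((i0:ℤ)+1) * i0 := by
    have : 2 * Nat.choose (i0+1) 2 = (i0+1) * i0 := by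
      have hdvd : 2 ∣ (i0+1) * i0 := by
        have := Nat.even_mul_succ_self i0
        rw [Nat.mul_comm] at this
        exact this.two_dvd
      rw [Nat.choose_two_right, Nat.add_sub_cancel, Nat.mul_div_cancel' hdvd]
    exact_mod_cast this
  have h2j : 2 * ((Nat.choose (j0+1) 2 : ℕ) : ℤ) = ((j0:ℤ)+1) * j0 := by
    have : 2 * Nat.choose (j0+1) 2 = (j0+1) * j0 := by
      have hdvd : 2 ∣ (j0+1) * j0 := by
        have := Nat.even_mul_succ_self j0
        rw [Nat.mul_comm] at this
        exact this.two_dvd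
      rw [Nat.choose_two_right, Nat.add_sub_cancel, Nat.mul_div_cancel' hdvd]
    exact_mod_cast this
  apply ζ_congr
  · have hE : ((e n (j0+1) (i0+1) : ℕ) : ℤ) =
        n * ((j0:ℤ)+1+((i0:ℤ)+1)+1) + ((Nat.choose (j0+1) 2 : ℕ) : ℤ) +
          ((Nat.choose (i0+1) 2 : ℕ) : ℤ) + 1 := by
      unfold e
      push_cast
      ring
    refine ⟨2*(n:ℤ) + n*j0 - j0 + i0 + Gs i0, ?_⟩
    have key : 2 * ((((k0:ℤ)+1) + ((e n (j0+1) (i0+1) : ℕ) : ℤ) +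
        (Gs j0 + j0 + ((n:ℤ)-1-j0)*((j0:ℤ)+2)) +
        (i0*((i0:ℤ)+1) + (Gs n - Gs i0 - i0) + 2*((n:ℤ)-1-i0))) -
        ((((k0:ℤ)-i0) + n*((i0:ℤ)+1)) + (Gs n + 2*(n:ℤ) - (i0+2)))) =
        2 * (2 * (2*(n:ℤ) + n*j0 - j0 + i0 + Gs i0)) := by
      rw [hE]
      linear_combination (-3:ℤ) * hGi + hGj + h2i + h2j
    have := mul_left_cancel₀ (two_ne_zero) key
    linarith [this]
  · ring

lemma neg_one_pow_ζ (s : ℕ) : (-1:Fcl)^s = ζ s 0 := by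
  have h := ζ_nat s 0
  rw [pow_zero, mul_one] at h
  simpa using h

lemma hterm (n i0 j0 k0 : ℕ) (hi : i0 < n) (hj : j0 < n) (hk : k0 < n) :
    (fpF (k0+j0+1))⁻¹ *
      φF ((-1 : RatFunc ℚ)^(e n (j0+1) (i0+1)) * fp (j0+i0+1) *
        xfibinom (n+j0) ((n:ℤ)-1-i0) * xfibinom (n+i0) ((n:ℤ)-1-j0) *
        (xfibinom (j0+i0) (j0:ℤ))^2) =
    ζ ((k0:ℤ)-i0) ((k0:ℤ)-i0) * ((AF n k0 - BF n j0)⁻¹ *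
      ((∏ m ∈ Finset.range n, (AF n i0 - BF n m)) *
       (∏ m ∈ (Finset.range n).erase i0, (BF n j0 - AF n m)) *
       (∏ m ∈ (Finset.range n).erase j0, (BF n j0 - BF n m))⁻¹ *
       (∏ m ∈ (Finset.range n).erase i0, (AF n i0 - AF n m))⁻¹)) := by
  have C := claim2 n i0 j0 hi hj
  have Z := ζ_rel n i0 j0 k0
  simp only [map_mul, map_pow, map_neg, map_one]
  rw [neg_one_pow_ζ]
  rw [show φF (fp (j0+i0+1)) = fpF (j0+i0+1) from rfl]
  rw [Zab hj, prod_PAB n i0, prod_EBA n i0 j0 hi hj, prod_Bden n j0 hj, prod_Aden n i0 hi]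
  have hDd : Dd^n = Dd^(n-1) * Dd := by
    rw [← pow_succ, show n-1+1 = n by omega]
  rw [hDd]
  set S' := fpF (k0+j0+1) with hS'
  set E0 := ζ ((e n (j0+1) (i0+1) : ℕ) : ℤ) 0 with hE0
  set F := fpF (j0+i0+1) with hF
  set X1 := φF (xfibinom (n+j0) ((n:ℤ)-1-i0)) with hX1
  set X2 := φF (xfibinom (n+i0) ((n:ℤ)-1-j0)) with hX2
  set X3 := φF (xfibinom (j0+i0) (j0:ℤ)) with hX3
  set R0 := ζ ((k0:ℤ)-i0) ((k0:ℤ)-i0) with hR0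
  set u := ζ ((k0:ℤ)+1) (2*(n:ℤ)+k0+1-j0) with hu
  set P1 := ζ (n*((i0:ℤ)+1)) (n*(2*(n:ℤ)+i0+1) - Gs n) with hP1
  set P2 := ζ (Gs n + 2*(n:ℤ) - (i0+2)) (n*(2*(n:ℤ)+1-j0) + Gs n - (2*(n:ℤ)+1-j0+i0)) with hP2
  set q1 := ζ (Gs j0 + j0 + ((n:ℤ)-1-j0)*((j0:ℤ)+2)) (((n:ℤ)-1)*(2*(n:ℤ)-j0) - (Gs n - j0)) with hq1
  set q2 := ζ (i0*((i0:ℤ)+1) + (Gs n - Gs i0 - i0) + 2*((n:ℤ)-1-i0))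
    (((n:ℤ)-1)*(2*(n:ℤ)+i0+2) + Gs n - i0) with hq2
  set Dm := Dd^(n-1) with hDm
  set Pf := ∏ m ∈ Finset.range n, fpF (i0+m+1) with hPf
  set EBf := ∏ m ∈ (Finset.range n).erase i0, fpF (m+j0+1) with hEBf
  set A1 := ΦF i0 with hA1
  set A2 := ΦF (n-1-i0) with hA2
  set B1 := ΦF j0 with hB1
  set B2 := ΦF (n-1-j0) with hB2
  have nS' : S' ≠ 0 := fpF_ne_zero _ (by omega)
  have nu : u ≠ 0 := ζ_ne _ _
  have nq1 : q1 ≠ 0 := ζ_ne _ _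
  have nq2 : q2 ≠ 0 := ζ_ne _ _
  have nDd : Dd ≠ 0 := Dd_ne
  have nDm : Dm ≠ 0 := pow_ne_zero _ Dd_ne
  have nA1 : A1 ≠ 0 := ΦF_ne _
  have nA2 : A2 ≠ 0 := ΦF_ne _
  have nB1 : B1 ≠ 0 := ΦF_ne _
  have nB2 : B2 ≠ 0 := ΦF_ne _
  apply Eq.trans (b := (E0 * F * X1 * X2 * X3^2) / S')
  · ring
  apply Eq.trans (b := (R0 * (P1 * (Dm * Dd) * Pf) * (P2 * Dm * EBf)) /
    ((u * Dd * S') * (q1 * Dm * (B1 * B2)) * (q2 * Dm * (A1 * A2))))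
  · rw [div_eq_div_iff nS'
      (by simp [mul_ne_zero_iff, nu, nq1, nq2, nDd, nDm, nA1, nA2, nB1, nB2, nS'])]
    linear_combination (S' * Dd * Dm * Dm * E0 * u * q1 * q2) * C +
      (S' * Dd * Dm * Dm * Pf * EBf) * Z
  · ring

lemma AF_inj (n : ℕ) : ∀ k ∈ Finset.range n, ∀ m ∈ Finset.range n, k ≠ m → AF n k ≠ AF n m := by
  intro k _ m _ hne heq
  have hsub : AF n k - AF n m = 0 := by rw [heq]; ring
  rcases Nat.lt_or_ge k m with h | h
  · rw [Zaa' h] at hsub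
    exact (mul_ne_zero (mul_ne_zero (ζ_ne _ _) Dd_ne) (fpF_ne_zero _ (by omega))) hsub
  · have h' : m < k := by omega
    rw [Zaa h'] at hsub
    exact (mul_ne_zero (mul_ne_zero (ζ_ne _ _) Dd_ne) (fpF_ne_zero _ (by omega))) hsub

lemma BF_inj (n : ℕ) : ∀ k ∈ Finset.range n, ∀ m ∈ Finset.range n, k ≠ m → BF n k ≠ BF n m := by
  intro k hk m hm hne heq
  simp only [Finset.mem_range] at hk hm
  have hsub : BF n k - BF n m = 0 := by rw [heq]; ring
  rcases Nat.lt_or_ge k m with h | h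
  · rw [Zbb' h hm] at hsub
    exact (mul_ne_zero (mul_ne_zero (ζ_ne _ _) Dd_ne) (fpF_ne_zero _ (by omega))) hsub
  · have h' : m < k := by omega
    rw [Zbb h' hk] at hsub
    exact (mul_ne_zero (mul_ne_zero (ζ_ne _ _) Dd_ne) (fpF_ne_zero _ (by omega))) hsub

lemma AB_ne (n : ℕ) : ∀ k ∈ Finset.range n, ∀ m ∈ Finset.range n, AF n k ≠ BF n m := by
  intro k _ m hm heq
  simp only [Finset.mem_range] at hm
  have hsub : AF n k - BF n m = 0 := by rw [heq]; ring
  rw [Zab hm] at hsub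
  exact (mul_ne_zero (mul_ne_zero (ζ_ne _ _) Dd_ne) (fpF_ne_zero _ (by omega))) hsub

lemma imK_pow (p : Polynomial ℤ) (t : ℕ) : imK (p ^ t) = imK p ^ t := by
  unfold imK
  rw [Polynomial.map_pow, map_pow]

lemma imK_neg_one_pow (t : ℕ) : imK ((-1) ^ t) = (-1 : RatFunc ℚ) ^ t := by
  unfold imK
  simp

lemma V_poly (n i0 j0 : ℕ) (hi : i0 < n) (hj : j0 < n) :
    (-1 : RatFunc ℚ) ^ (e n (i0+1) (j0+1)) * fp (i0+j0+1) *
      xfibinom (n+i0) ((n:ℤ)-1-j0) * xfibinom (n+j0) ((n:ℤ)-1-i0) *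
      (xfibinom (i0+j0) (i0:ℤ))^2 =
    imK ((-1) ^ (e n (i0+1) (j0+1)) *
      (fibPoly (i0+j0+1) * FB (n+i0) (n-1-j0) * FB (n+j0) (n-1-i0) * FB (i0+j0) i0 ^ 2)) := by
  rw [imK_mul, imK_neg_one_pow, imK_mul, imK_mul, imK_mul, imK_pow, imK_fib]
  rw [show (n:ℤ)-1-j0 = ((n-1-j0 : ℕ) : ℤ) by omega,
      show (n:ℤ)-1-i0 = ((n-1-i0 : ℕ) : ℤ) by omega]
  rw [xfib_eq (n+i0) (n-1-j0) (by omega), xfib_eq (n+j0) (n-1-i0) (by omega),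
      xfib_eq (i0+j0) i0 (by omega)]
  ring


/-- The matrix `V(n)` with entries
`V_{ij}(n) = (-1)^{e(n,i,j)} f_{i+j-1} ((n+i-1 choose n-j))_x ((n+j-1 choose n-i))_x
((i+j-2 choose i-1))_x²` is the inverse of the matrix `R_n(f_k(x))` whose `(i,j)`
entry is `1 / f_{i+j-1}(x)`, and every entry of `V(n)` is (the image in `ℚ(x)` of)
a polynomial with integer coefficients.  (Indices `i, j` run from `1` to `n`;
here `Fin n` is used, so `i` corresponds to `i.1 + 1` and `j` to `j.1 + 1`.) -/
theorem filbertX_matrix_inverse (n : ℕ) (hn : 1 ≤ n)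
    (R V : Matrix (Fin n) (Fin n) (RatFunc ℚ))
    (hR : ∀ i j : Fin n, R i j = 1 / fp (i.1 + j.1 + 1))
    (hV : ∀ i j : Fin n, V i j =
      (-1 : RatFunc ℚ) ^ (e n (i.1 + 1) (j.1 + 1)) * fp (i.1 + j.1 + 1) *
        xfibinom (n + i.1) ((n : ℤ) - 1 - j.1) * xfibinom (n + j.1) ((n : ℤ) - 1 - i.1) *
        (xfibinom (i.1 + j.1) (i.1 : ℤ)) ^ 2) :
    V * R = 1 ∧ R * V = 1 ∧
      ∀ i j : Fin n, ∃ p : Polynomial ℤ,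
        V i j = algebraMap (Polynomial ℚ) (RatFunc ℚ) (p.map (Int.castRingHom ℚ)) := by
  have key : R * V = 1 := by
    ext k i
    have hk : (k:ℕ) < n := k.2
    have hi : (i:ℕ) < n := i.2
    apply φF.injective
    rw [Matrix.mul_apply, map_sum]
    have hsummand : ∀ j : Fin n, φF (R k j * V j i) =
        ζ ((k.1:ℤ)-i.1) ((k.1:ℤ)-i.1) * ((AF n k.1 - BF n j.1)⁻¹ *
          ((∏ m ∈ Finset.range n, (AF n i.1 - BF n m)) *
           (∏ m ∈ (Finset.range n).erase i.1, (BF n j.1 - AF n m)) *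
           (∏ m ∈ (Finset.range n).erase j.1, (BF n j.1 - BF n m))⁻¹ *
           (∏ m ∈ (Finset.range n).erase i.1, (AF n i.1 - AF n m))⁻¹)) := by
      intro j
      rw [hR k j, hV j i, map_mul]
      rw [show φF (1 / fp (k.1 + j.1 + 1)) = (fpF (k.1+j.1+1))⁻¹ by
        rw [one_div, map_inv₀]; rfl]
      exact hterm n i.1 j.1 k.1 hi j.2 hk
    rw [Finset.sum_congr rfl (fun j _ => hsummand j), ← Finset.mul_sum]
    rw [Fin.sum_univ_eq_sum_range (fun j0 => (AF n k.1 - BF n j0)⁻¹ *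
          ((∏ m ∈ Finset.range n, (AF n i.1 - BF n m)) *
           (∏ m ∈ (Finset.range n).erase i.1, (BF n j0 - AF n m)) *
           (∏ m ∈ (Finset.range n).erase j0, (BF n j0 - BF n m))⁻¹ *
           (∏ m ∈ (Finset.range n).erase i.1, (AF n i.1 - AF n m))⁻¹)) n]
    rw [cauchy_orth n (AF n) (BF n) (AF_inj n) (BF_inj n) (AB_ne n) k.1 i.1
      (Finset.mem_range.2 hk) (Finset.mem_range.2 hi)]
    rw [Matrix.one_apply]
    by_cases h : k = i
    · subst h
      rw [if_pos rfl, if_pos rfl, sub_self, ζ_zero, map_one, mul_one]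
    · rw [if_neg h, if_neg (fun hh => h (Fin.ext hh)), mul_zero, map_zero]
  refine ⟨mul_eq_one_comm.mp key, key, ?_⟩
  intro i j
  refine ⟨(-1) ^ (e n (i.1+1) (j.1+1)) *
    (fibPoly (i.1+j.1+1) * FB (n+i.1) (n-1-j.1) * FB (n+j.1) (n-1-i.1) * FB (i.1+j.1) i.1 ^ 2), ?_⟩
  rw [hV i j]
  exact V_poly n i.1 j.1 i.2 j.2
end

section
/- For all integers 0 ≤ k ≤ n, the x-Fibonomial coefficient ((n choose k))_x, a priori a rational function, is a polynomial with integer coefficients; that is, there is a polynomial p ∈ ℤ[x] whose image in ℚ(x) equals ((n choose k))_x. -/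
lemma fibPoly_addf (m j : ℕ) :
    fibPoly (m + j + 1) = fibPoly (m + 1) * fibPoly (j + 1) + fibPoly m * fibPoly j := by
  induction m using Nat.twoStepInduction generalizing j with
  | zero => simp [fibPoly]
  | one =>
    rw [show 1 + j + 1 = j + 2 from by omega,
      show fibPoly (j + 2) = Polynomial.X * fibPoly (j + 1) + fibPoly j from rfl]
    simp [fibPoly]
  | more m ih1 ih2 =>
    have h1 : m + 2 + j + 1 = (m + j + 1) + 2 := by omega
    have h2 : m + j + 1 + 1 = (m + 1) + j + 1 := by omega
    rw [h1, show fibPoly ((m + j + 1) + 2) = Polynomial.X * fibPoly (m + j + 1 + 1)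
        + fibPoly (m + j + 1) from rfl, h2, ih2 j, ih1 j,
      show fibPoly (m + 2 + 1) = Polynomial.X * fibPoly (m + 2) + fibPoly (m + 1) from rfl,
      show fibPoly (m + 2) = Polynomial.X * fibPoly (m + 1) + fibPoly m from rfl]
    ring

lemma fibPoly_eval_one (n : ℕ) : (fibPoly n).eval 1 = (Nat.fib n : ℤ) := by
  induction n using Nat.twoStepInduction with
  | zero => simp [fibPoly]
  | one => simp [fibPoly]
  | more n ih1 ih2 =>
    show Polynomial.eval 1 (Polynomial.X * fibPoly (n + 1) + fibPoly n) = _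
    rw [Nat.fib_add_two]
    simp [ih1, ih2]; push_cast; ring

lemma fibPoly_succ_ne_zero (n : ℕ) : fibPoly (n + 1) ≠ 0 := by
  intro h
  have h1 := fibPoly_eval_one (n + 1)
  rw [h, Polynomial.eval_zero] at h1
  have h2 : Nat.fib (n + 1) = 0 := by exact_mod_cast h1.symm
  have := Nat.fib_pos.mpr (show 0 < n + 1 by omega)
  omega

lemma fp_zero : fp 0 = 0 := by simp [fp, fibPoly]

lemma fp_succ_ne_zero (n : ℕ) : fp (n + 1) ≠ 0 := by
  have h1 : (fibPoly (n + 1)).map (Int.castRingHom ℚ) ≠ 0 := by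
    intro h
    exact fibPoly_succ_ne_zero n (Polynomial.map_injective _ Int.cast_injective (by simpa using h))
  simpa [fp] using RatFunc.algebraMap_ne_zero h1

lemma fp_addf (m j : ℕ) :
    fp (m + j + 1) = fp (m + 1) * fp (j + 1) + fp m * fp j := by
  unfold fp
  rw [fibPoly_addf m j]
  simp [Polynomial.map_add, Polynomial.map_mul]

lemma xfibinom_nat (n k : ℕ) :
    xfibinom n (k : ℤ) = ∏ i ∈ Finset.range k, fp (n - i) / fp (i + 1) := by
  simp [xfibinom]

lemma xfibinom_rec (n k : ℕ) :
    xfibinom (n + 1) ((k : ℤ) + 1) =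
      fp (n - k + 1) * xfibinom n k + fp k * xfibinom n (k + 1) := by
  have hcast : ((k : ℤ) + 1) = ((k + 1 : ℕ) : ℤ) := by push_cast; ring
  rw [hcast, xfibinom_nat, xfibinom_nat, xfibinom_nat]
  by_cases hk : k ≤ n
  · have hnum : ∏ i ∈ Finset.range (k + 1), fp (n + 1 - i) / fp (i + 1) =
        ((∏ i ∈ Finset.range k, fp (n - i)) * fp (n + 1)) /
          ((∏ i ∈ Finset.range k, fp (i + 1)) * fp (k + 1)) := by
      rw [Finset.prod_div_distrib, Finset.prod_range_succ' (fun i => fp (n + 1 - i)) k,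
        Finset.prod_range_succ]
      simp [Nat.succ_sub_succ]
    rw [hnum, Finset.prod_div_distrib, Finset.prod_div_distrib,
      Finset.prod_range_succ (fun i => fp (n - i)) k,
      Finset.prod_range_succ (fun i => fp (i + 1)) k]
    set A := ∏ i ∈ Finset.range k, fp (n - i) with hA
    set B := ∏ i ∈ Finset.range k, fp (i + 1) with hBdef
    have hB : B ≠ 0 := Finset.prod_ne_zero_iff.mpr fun i _ => fp_succ_ne_zero i
    have hk1 : fp (k + 1) ≠ 0 := fp_succ_ne_zero k
    have hadd : fp (n + 1) = fp (k + 1) * fp (n - k + 1) + fp k * fp (n - k) := by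
      have := fp_addf k (n - k)
      rw [Nat.add_sub_cancel' hk] at this
      exact this
    rw [hadd]
    field_simp
  · push_neg at hk
    have h1 : ∏ i ∈ Finset.range (k + 1), fp (n + 1 - i) / fp (i + 1) = 0 := by
      apply Finset.prod_eq_zero (i := n + 1) (Finset.mem_range.mpr (by omega))
      simp [fp_zero]
    have h2 : ∏ i ∈ Finset.range k, fp (n - i) / fp (i + 1) = 0 := by
      apply Finset.prod_eq_zero (i := n) (Finset.mem_range.mpr (by omega))
      simp [fp_zero]
    have h3 : ∏ i ∈ Finset.range (k + 1), fp (n - i) / fp (i + 1) = 0 := by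
      apply Finset.prod_eq_zero (i := n) (Finset.mem_range.mpr (by omega))
      simp [fp_zero]
    rw [h1, h2, h3]; ring

/-- Integer-polynomial Fibonomial coefficients, via the Pascal-type recurrence. -/
noncomputable def fibinomAux : ℕ → ℕ → Polynomial ℤ
  | _, 0 => 1
  | 0, _ + 1 => 0
  | n + 1, k + 1 => fibPoly (n - k + 1) * fibinomAux n k + fibPoly k * fibinomAux n (k + 1)

lemma xfibinom_eq (n k : ℕ) :
    xfibinom n (k : ℤ) =
      algebraMap (Polynomial ℚ) (RatFunc ℚ) ((fibinomAux n k).map (Int.castRingHom ℚ)) := by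
  induction n generalizing k with
  | zero =>
    match k with
    | 0 => simp [xfibinom, fibinomAux]
    | k + 1 =>
      rw [xfibinom_nat]
      have h0 : ∏ i ∈ Finset.range (k + 1), fp (0 - i) / fp (i + 1) = 0 := by
        apply Finset.prod_eq_zero (i := 0) (Finset.mem_range.mpr (by omega))
        simp [fp_zero]
      rw [h0]
      simp [fibinomAux]
  | succ n ih =>
    match k with
    | 0 => simp [xfibinom, fibinomAux]
    | k + 1 =>
      have hcast : (((k + 1 : ℕ)) : ℤ) = (k : ℤ) + 1 := by push_cast; ring
      rw [hcast, xfibinom_rec n k, ih k,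
        show xfibinom n ((k : ℤ) + 1) = xfibinom n (((k + 1 : ℕ)) : ℤ) by norm_cast,
        ih (k + 1),
        show fibinomAux (n + 1) (k + 1) =
          fibPoly (n - k + 1) * fibinomAux n k + fibPoly k * fibinomAux n (k + 1) from rfl]
      simp [fp, Polynomial.map_add, Polynomial.map_mul]

/-- For `0 ≤ k ≤ n`, the `x`-Fibonomial coefficient `((n choose k))_x`, a priori an
element of `ℚ(x)`, is a polynomial with integer coefficients. -/
theorem xfibinom_integer_polynomial (n k : ℕ) (hkn : k ≤ n) :
    ∃ p : Polynomial ℤ,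
      xfibinom n (k : ℤ) =
        algebraMap (Polynomial ℚ) (RatFunc ℚ) (p.map (Int.castRingHom ℚ)) := by
  exact ⟨fibinomAux n k, xfibinom_eq n k⟩
end

section
/- For all integers n, i, j with 1 ≤ i ≤ n and 1 ≤ j ≤ n, the Fibonacci polynomials satisfy the identity M(n,i,j) = (−1)^{i+j} f_{n+i-1} f_{n+j-1} f_{i+j-2} + f_{n-i} f_{n-j} f_{i+j-2} + (−1)^{i+j-1} f_{n+i-2} f_{n+j-1} f_{i+j-1} + f_{n-i+1} f_{n-j} f_{i+j-1} = 0 in ℤ[x]. -/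
lemma fibPoly_rec (n : ℕ) :
    fibPoly (n + 2) = Polynomial.X * fibPoly (n + 1) + fibPoly n := rfl

lemma fib_add (m k : ℕ) :
    fibPoly (m + k + 1) = fibPoly (m + 1) * fibPoly (k + 1) + fibPoly m * fibPoly k := by
  induction k using Nat.twoStepInduction with
  | zero => simp [fibPoly]
  | one =>
      show fibPoly (m + 2) = fibPoly (m + 1) * fibPoly 2 + fibPoly m * fibPoly 1
      rw [fibPoly_rec m]
      simp [fibPoly]; ring
  | more k ih1 ih2 =>
      rw [show m + (k + 2) + 1 = (m + k + 1) + 2 by ring, fibPoly_rec,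
        show m + k + 1 + 1 = m + (k + 1) + 1 by ring, ih2, ih1,
        show k + 2 + 1 = k + 1 + 2 by ring, fibPoly_rec (k + 1), fibPoly_rec k]
      ring

lemma fib_sub (a p : ℕ) :
    (-1 : Polynomial ℤ) ^ a * fibPoly p =
      fibPoly (a + p) * fibPoly (a + 1) - fibPoly (a + p + 1) * fibPoly a := by
  induction a with
  | zero => simp [fibPoly]
  | succ a ih =>
      rw [show a + 1 + 1 = a + 2 from rfl, show a + 1 + p = a + p + 1 by ring,
        show a + p + 1 + 1 = a + p + 2 from rfl, fibPoly_rec a, fibPoly_rec (a + p)]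
      linear_combination (-1 : Polynomial ℤ) * ih


/-- The identity `M(n,i,j) = 0` in `ℤ[x]`, where
`M(n,i,j) = (-1)^{i+j} f_{n+i-1} f_{n+j-1} f_{i+j-2} + f_{n-i} f_{n-j} f_{i+j-2}
  + (-1)^{i+j-1} f_{n+i-2} f_{n+j-1} f_{i+j-1} + f_{n-i+1} f_{n-j} f_{i+j-1}`. -/
theorem M_identity (n i j : ℕ) (hi1 : 1 ≤ i) (hin : i ≤ n) (hj1 : 1 ≤ j) (hjn : j ≤ n) :
    (-1 : Polynomial ℤ) ^ (i + j) * fibPoly (n + i - 1) * fibPoly (n + j - 1) *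
        fibPoly (i + j - 2) +
      fibPoly (n - i) * fibPoly (n - j) * fibPoly (i + j - 2) +
      (-1 : Polynomial ℤ) ^ (i + j - 1) * fibPoly (n + i - 2) * fibPoly (n + j - 1) *
        fibPoly (i + j - 1) +
      fibPoly (n - i + 1) * fibPoly (n - j) * fibPoly (i + j - 1) = 0 := by
  obtain ⟨a, rfl⟩ : ∃ a, i = a + 1 := ⟨i - 1, by omega⟩
  obtain ⟨b, rfl⟩ : ∃ b, j = b + 1 := ⟨j - 1, by omega⟩
  obtain ⟨p, rfl⟩ : ∃ p, n = a + p + 1 := ⟨n - a - 1, by omega⟩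
  obtain ⟨q, hq⟩ : ∃ q, b + q = a + p := ⟨a + p - b, by omega⟩
  set s : ℕ := a + p with hs
  -- rewrite all the index arithmetic
  have i1 : a + p + 1 + (a + 1) - 1 = s + a + 1 := by omega
  have i2 : a + p + 1 + (b + 1) - 1 = s + b + 1 := by omega
  have i3 : a + p + 1 + (a + 1) - 2 = s + a := by omega
  have i4 : a + p + 1 - (a + 1) = p := by omega
  have i5 : a + p + 1 - (b + 1) = q := by omega
  have i6 : a + 1 + (b + 1) - 2 = a + b := by omega
  have i7 : a + 1 + (b + 1) - 1 = a + b + 1 := by omega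
  rw [i1, i2, i3, i4, i5, i6, i7]
  set U := fibPoly s with hU
  set V := fibPoly (s + 1) with hV
  set A := fibPoly a with hA
  set A1 := fibPoly (a + 1) with hA1
  set B := fibPoly b with hB
  set B1 := fibPoly (b + 1) with hB1
  set ε := (-1 : Polynomial ℤ) ^ a with hε
  set δ := (-1 : Polynomial ℤ) ^ b with hδ
  have hεε : ε * ε = 1 := by rw [hε, ← mul_pow]; norm_num
  have hδδ : δ * δ = 1 := by rw [hδ, ← mul_pow]; norm_num
  have T1 : fibPoly (s + a + 1) = V * A1 + U * A := fib_add s a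
  have T2 : fibPoly (s + b + 1) = V * B1 + U * B := fib_add s b
  have T3 : fibPoly (s + a) = V * A + U * (A1 - Polynomial.X * A) := by
    have h2 : fibPoly (s + a + 2) = Polynomial.X * fibPoly (s + a + 1) + fibPoly (s + a) :=
      fibPoly_rec (s + a)
    have h3 : fibPoly (s + (a + 1) + 1) =
        fibPoly (s + 1) * fibPoly (a + 2) + fibPoly s * fibPoly (a + 1) := fib_add s (a + 1)
    rw [show s + (a + 1) + 1 = s + a + 2 by ring, fibPoly_rec a, ← hU, ← hV, ← hA, ← hA1] at h3
    rw [h3, T1] at h2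
    linear_combination -h2
  have T4 : fibPoly p = ε * (U * A1 - V * A) := by
    have h := fib_sub a p
    rw [← hs, ← hU, ← hV, ← hA, ← hA1, ← hε] at h
    calc fibPoly p = ε * (ε * fibPoly p) := by rw [← mul_assoc, hεε, one_mul]
      _ = ε * (U * A1 - V * A) := by rw [h]
  have T5 : fibPoly q = δ * (U * B1 - V * B) := by
    have h := fib_sub b q
    rw [show b + q + 1 = s + 1 by omega, hq, ← hU, ← hV, ← hB, ← hB1, ← hδ] at h
    calc fibPoly q = δ * (δ * fibPoly q) := by rw [← mul_assoc, hδδ, one_mul]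
      _ = δ * (U * B1 - V * B) := by rw [h]
  have T6 : fibPoly (p + 1) = ε * (V * A1 - (Polynomial.X * V + U) * A) := by
    have h := fib_sub a (p + 1)
    rw [show a + (p + 1) + 1 = s + 2 by omega, show a + (p + 1) = s + 1 by omega,
      fibPoly_rec s, ← hU, ← hV, ← hA, ← hA1, ← hε] at h
    calc fibPoly (p + 1) = ε * (ε * fibPoly (p + 1)) := by rw [← mul_assoc, hεε, one_mul]
      _ = _ := by rw [h]
  have T8 : fibPoly (a + b + 1) = A1 * B1 + A * B := fib_add a b
  have T7 : fibPoly (a + b) = A * B1 + A1 * B - Polynomial.X * A * B := by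
    have h2 : fibPoly (a + b + 2) = Polynomial.X * fibPoly (a + b + 1) + fibPoly (a + b) :=
      fibPoly_rec (a + b)
    have h3 : fibPoly (a + 1 + b + 1) =
        fibPoly (a + 2) * fibPoly (b + 1) + fibPoly (a + 1) * fibPoly b := fib_add (a + 1) b
    rw [show a + 1 + b + 1 = a + b + 2 by ring, fibPoly_rec a, ← hA, ← hA1, ← hB, ← hB1] at h3
    rw [h3, T8] at h2
    linear_combination -h2
  have S1 : (-1 : Polynomial ℤ) ^ (a + 1 + (b + 1)) = ε * δ := by
    rw [hε, hδ]; ring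
  have S2 : (-1 : Polynomial ℤ) ^ (a + b + 1) = -(ε * δ) := by
    rw [hε, hδ]; ring
  rw [T1, T2, T3, T4, T5, T6, T7, T8, S1, S2]
  ring
end

section
/- For every integer m ≥ 2, the identity Σ_{j=1}^m (−1)^{e(m,1,j)} · (f_j/f_{j+m-1}) · ((m choose m-j))_x · ((m+j-1 choose m-1))_x = 0 holds in ℚ(x). (This is the statement p(m,1,m) = 0 for m > 1.) -/

noncomputable def Xr : RatFunc ℚ := algebraMap (Polynomial ℚ) (RatFunc ℚ) Polynomial.X

lemma fp_one : fp 1 = 1 := by simp [fp, fibPoly]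

lemma fp_rec (n : ℕ) : fp (n+2) = Xr * fp (n+1) + fp n := by
  simp [fp, fibPoly, Xr, Polynomial.map_add, Polynomial.map_mul, map_add, map_mul]

lemma fp_ne_zero_s11 (n : ℕ) (h : 1 ≤ n) : fp n ≠ 0 := by
  have h1 : fibPoly n ≠ 0 := by
    intro hc
    have := fibPoly_eval_one n
    rw [hc] at this
    simp at this
    have := Nat.fib_pos.2 h
    omega
  have h2 : (fibPoly n).map (Int.castRingHom ℚ) ≠ 0 :=
    (Polynomial.map_ne_zero_iff (by exact Int.cast_injective)).2 h1
  simpa [fp] using (RatFunc.algebraMap_ne_zero h2)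

lemma docagne (d b : ℕ) :
    fp (b+d+1) * fp b - fp (b+d) * fp (b+1) = (-1:RatFunc ℚ)^(b+1) * fp d := by
  induction b with
  | zero => simp [fp_zero, fp_one]
  | succ b ih =>
    have e1 : b+1+d+1 = (b+d)+2 := by omega
    have e2 : b+1+d = (b+d)+1 := by omega
    rw [e1, e2, fp_rec, fp_rec, pow_succ]
    linear_combination (-1:RatFunc ℚ) * ih

lemma vajda (b d k : ℕ) :
    fp (b+d+k) * fp b - fp (b+d) * fp (b+k) = (-1:RatFunc ℚ)^(b+1) * fp d * fp k := by
  induction k using Nat.twoStepInduction with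
  | zero => simp [fp_zero]
  | one => have := docagne d b; rw [fp_one]; linear_combination this
  | more k ih1 ih2 =>
    have e1 : b+d+(k+2) = (b+d+k)+2 := by omega
    have e2 : b+(k+2) = (b+k)+2 := by omega
    have e3 : b+d+(k+1) = (b+d+k)+1 := by omega
    have e4 : b+(k+1) = (b+k)+1 := by omega
    rw [e1, e2, fp_rec, fp_rec, fp_rec k]
    rw [e3, e4] at ih2
    linear_combination Xr * ih2 + ih1

noncomputable def Phi (n : ℕ) : RatFunc ℚ := ∏ i ∈ Finset.range n, fp (i+1)

lemma Phi_succ (n : ℕ) : Phi (n+1) = Phi n * fp (n+1) := Finset.prod_range_succ _ _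

lemma Phi_ne_zero (n : ℕ) : Phi n ≠ 0 :=
  Finset.prod_ne_zero_iff.2 fun i _ => fp_ne_zero_s11 (i+1) (by omega)

lemma prod_shift (n k : ℕ) (h : k ≤ n) :
    (∏ i ∈ Finset.range k, fp (n - i)) = Phi n / Phi (n-k) := by
  rw [eq_div_iff (Phi_ne_zero _)]
  have h1 : Phi n = Phi (n-k) * ∏ i ∈ Finset.range k, fp ((n-k)+i+1) := by
    obtain ⟨d, rfl⟩ : ∃ d, n = d + k := ⟨n-k, by omega⟩
    simp only [Nat.add_sub_cancel, Phi, Finset.prod_range_add]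
  rw [h1]
  have h2 : (∏ i ∈ Finset.range k, fp (n - i)) = ∏ i ∈ Finset.range k, fp ((n-k)+i+1) := by
    rw [← Finset.prod_range_reflect (fun i => fp ((n-k)+i+1)) k]
    apply Finset.prod_congr rfl
    intro j hj
    simp only [Finset.mem_range] at hj
    congr 1
    omega
  rw [h2]; ring

lemma xfib_nat (n k : ℕ) (h : k ≤ n) :
    xfibinom n (k : ℤ) = Phi n / (Phi (n-k) * Phi k) := by
  rw [xfibinom, if_pos (by positivity), Int.toNat_natCast, Finset.prod_div_distrib,
    prod_shift n k h]
  simp only [Phi]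
  rw [div_div]

noncomputable def canon (m j : ℕ) : RatFunc ℚ :=
  (-1)^(e m 1 j) * fp j * Phi m * Phi (m+j-2) / (Phi (m-j) * Phi j * Phi j * Phi (m-1))

lemma term_eq (m j : ℕ) (h1 : 1 ≤ j) (h2 : j ≤ m) :
    (-1 : RatFunc ℚ) ^ (e m 1 j) * (fp j / fp (j + m - 1)) *
        xfibinom m ((m : ℤ) - j) * xfibinom (m + j - 1) ((m : ℤ) - 1) = canon m j := by
  obtain ⟨a, rfl⟩ : ∃ a, j = a+1 := ⟨j-1, by omega⟩
  obtain ⟨c, rfl⟩ : ∃ c, m = a+1+c := ⟨m-(a+1), by omega⟩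
  have hA : ((a+1+c : ℕ) : ℤ) - ((a+1 : ℕ) : ℤ) = ((c : ℕ) : ℤ) := by push_cast; ring
  have hB : ((a+1+c : ℕ) : ℤ) - 1 = ((a+c : ℕ) : ℤ) := by push_cast; ring
  rw [hA, hB, xfib_nat _ _ (by omega), xfib_nat _ _ (by omega)]
  simp only [canon,
    show (a+1)+(a+1+c)-1 = (a+(a+c))+1 from by omega,
    show (a+1+c)-c = a+1 from by omega,
    show (a+1+c)+(a+1)-1 = (a+(a+c))+1 from by omega,
    show (a+(a+c))+1-(a+c) = a+1 from by omega,
    show (a+1+c)+(a+1)-2 = a+(a+c) from by omega,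
    show (a+1+c)-(a+1) = c from by omega,
    show (a+1+c)-1 = a+c from by omega]
  rw [Phi_succ (a+(a+c))]
  have n1 : fp ((a+(a+c))+1) ≠ 0 := fp_ne_zero_s11 _ (by omega)
  field_simp [Phi_ne_zero]

lemma step (m j : ℕ) (h1 : 1 ≤ j) (h2 : j+1 ≤ m) :
    canon m j * (fp (m+j-1) * fp (m-j)) * (-1 : RatFunc ℚ)^(m+j) =
      canon m (j+1) * (fp j * fp (j+1)) := by
  have hE : e m 1 (j+1) = e m 1 j + (m+j) := by
    have h : Nat.choose (j+1) 2 = Nat.choose j 2 + j := by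
      rw [show 2 = 1+1 from rfl, Nat.choose_succ_succ, Nat.choose_one_right]
      simp only [Nat.succ_eq_add_one]
      omega
    simp only [e, h]
    ring
  obtain ⟨a, rfl⟩ : ∃ a, j = a+1 := ⟨j-1, by omega⟩
  obtain ⟨c, rfl⟩ : ∃ c, m = a+2+c := ⟨m-(a+2), by omega⟩
  simp only [canon, hE,
    show (a+2+c)+(a+1)-1 = (a+(a+c+1))+1 from by omega,
    show (a+2+c)-(a+1) = c+1 from by omega,
    show (a+2+c)+(a+1+1)-2 = (a+(a+c+1))+1 from by omega,
    show (a+2+c)-(a+1+1) = c from by omega,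
    show (a+2+c)-1 = a+c+1 from by omega,
    show (a+2+c)+(a+1) = (a+(a+c+1))+2 from by omega,
    show (a+(a+c+1))+2-1 = (a+(a+c+1))+1 from by omega,
    show (a+(a+c+1))+2-2 = a+(a+c+1) from by omega]
  rw [Phi_succ (a+(a+c+1)), Phi_succ c, Phi_succ (a+1), pow_add]
  have n1 : fp ((a+(a+c+1))+1) ≠ 0 := fp_ne_zero_s11 _ (by omega)
  have n2 : fp (c+1) ≠ 0 := fp_ne_zero_s11 _ (by omega)
  have n3 : fp (a+1+1) ≠ 0 := fp_ne_zero_s11 _ (by omega)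
  simp only [div_mul_eq_mul_div]
  rw [div_eq_div_iff (by apply_rules [mul_ne_zero, Phi_ne_zero])
    (by apply_rules [mul_ne_zero, Phi_ne_zero])]
  ring

/-- The identity `p(m,1,m) = 0` for `m > 1`:
`Σ_{j=1}^{m} (-1)^{e(m,1,j)} (f_j / f_{j+m-1}) ((m choose m-j))_x ((m+j-1 choose m-1))_x = 0`
in `ℚ(x)`. -/
theorem p_m_1_m (m : ℕ) (hm : 2 ≤ m) :
    ∑ j ∈ Finset.Icc 1 m,
      (-1 : RatFunc ℚ) ^ (e m 1 j) * (fp j / fp (j + m - 1)) *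
        xfibinom m ((m : ℤ) - j) * xfibinom (m + j - 1) ((m : ℤ) - 1) = 0 := by
  have claim : ∀ j : ℕ, j + 1 ≤ m →
      (∑ i ∈ Finset.Icc 1 (j+1),
        (-1 : RatFunc ℚ) ^ (e m 1 i) * (fp i / fp (i + m - 1)) *
          xfibinom m ((m : ℤ) - i) * xfibinom (m + i - 1) ((m : ℤ) - 1)) *
        (fp (m-1) * fp m) =
      canon m (j+1) * (fp (m+j) * fp (m-(j+1))) := by
    intro j
    induction j with
    | zero =>
      intro h
      rw [Finset.Icc_self, Finset.sum_singleton, term_eq m 1 le_rfl (by omega)]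
      rw [show m+0 = m from by omega, show m-(0+1) = m-1 from by omega]
      ring
    | succ j ih =>
      intro h
      have ih' := ih (by omega)
      rw [Finset.sum_Icc_succ_top (by omega : 1 ≤ j+1+1), add_mul, ih',
        term_eq m (j+2) (by omega) (by omega)]
      have hs : ((-1:RatFunc ℚ)^(m+(j+1))) * ((-1:RatFunc ℚ)^(m+(j+1))) = 1 := by
        rw [← pow_add]; exact Even.neg_one_pow ⟨m+(j+1), rfl⟩
      have st := step m (j+1) (by omega) (by omega)
      rw [show m+(j+1)-1 = m+j from by omega] at st
      have key : canon m (j+1) * (fp (m+j) * fp (m-(j+1))) =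
          canon m (j+2) * (fp (j+1) * fp (j+2)) * (-1:RatFunc ℚ)^(m+(j+1)) := by
        linear_combination (-1:RatFunc ℚ)^(m+(j+1)) * st -
          (canon m (j+1) * (fp (m+j) * fp (m-(j+1)))) * hs
      rw [key]
      obtain ⟨c, hc⟩ : ∃ c, m = j+2+c := ⟨m-(j+2), by omega⟩
      have hv := vajda c (j+1) (j+2)
      rw [show c+(j+1)+(j+2) = m+(j+1) from by omega, show c+(j+1) = m-1 from by omega,
        show c+(j+2) = m from by omega] at hv
      have hsign : ((-1:RatFunc ℚ)^(m+(j+1))) = (-1:RatFunc ℚ)^(c+1) := by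
        rw [show m+(j+1) = (c+1) + 2*(j+1) from by omega, pow_add, pow_mul]
        simp
      rw [show j+1+1 = j+2 from rfl, show m-(j+2) = c from by omega, hsign]
      linear_combination (-(canon m (j+2))) * hv
  have h0 := claim (m-1) (by omega)
  rw [show m-1+1 = m from by omega] at h0
  rw [show m-m = 0 from by omega, fp_zero, mul_zero, mul_zero] at h0
  have hne : fp (m-1) * fp m ≠ 0 :=
    mul_ne_zero (fp_ne_zero_s11 _ (by omega)) (fp_ne_zero_s11 _ (by omega))
  exact (mul_eq_zero.1 h0).resolve_right hne
end

section
/- Let n ≥ 1, let a_k = C(k+1,2) = k(k+1)/2, and let A(n) be the n×n rational matrix whose (i,j) entry, for 1 ≤ i,j ≤ n, is A_{ij}(n) = Σ_{k=0}^{j-1} (−1)^{i+k+1} C(n+i, n−k) C(n+k, n−i) C(i+k−1, k) C(i+k, k) · i/2. Then every A_{ij}(n) is an integer, and A(n) is the inverse of the matrix R_n(a_k) whose (i,j) entry is 1/a_{i+j-1} = 2/((i+j-1)(i+j)). -/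
open Finset Polynomial


lemma factQ_ne (k : ℕ) : ((k.factorial : ℚ)) ≠ 0 :=
  Nat.cast_ne_zero.mpr k.factorial_ne_zero

lemma prod_shift_s13 (k n : ℕ) :
    ∏ m ∈ range n, ((k : ℚ) + m + 1) = (n + k).factorial / k.factorial := by
  induction n with
  | zero => simp [div_self (factQ_ne k)]
  | succ n ih =>
      rw [Finset.prod_range_succ, ih]
      have : (n + 1 + k).factorial = (n + k + 1) * (n + k).factorial := by
        rw [show n + 1 + k = (n + k) + 1 by omega, Nat.factorial_succ]
      rw [this]
      push_cast
      field_simp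
      ring

lemma prod_sub_range (k : ℕ) : ∏ l ∈ range k, ((k : ℚ) - l) = k.factorial := by
  have h := Finset.prod_range_reflect (fun l => (k : ℚ) - l) k
  rw [← h]
  have h2 : ∏ j ∈ range k, ((k : ℚ) - (k - 1 - j : ℕ)) = ∏ j ∈ range k, ((0 : ℚ) + j + 1) := by
    refine Finset.prod_congr rfl fun j hj => ?_
    rw [Finset.mem_range] at hj
    have : ((k - 1 - j : ℕ) : ℚ) = (k : ℚ) - 1 - j := by
      push_cast [Nat.cast_sub (by omega : j ≤ k - 1), Nat.cast_sub (by omega : 1 ≤ k)]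
      ring
    rw [this]; ring
  rw [h2]
  have h3 := prod_shift_s13 0 k
  simp only [Nat.cast_zero] at h3
  rw [h3]
  simp

lemma erase_range_split (n k : ℕ) (hk : k < n) :
    (range n).erase k = range k ∪ Ico (k+1) n := by
  ext l
  simp only [mem_erase, mem_range, mem_union, mem_Ico]
  omega

lemma node_prod_E (n k : ℕ) (hk : k < n) :
    ∏ l ∈ (range n).erase k, ((l : ℚ) - k)
      = (-1) ^ k * k.factorial * (n - 1 - k).factorial := by
  rw [erase_range_split n k hk, Finset.prod_union (by
    simp only [Finset.disjoint_left, mem_range, mem_Ico]; omega)]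
  have h1 : ∏ l ∈ range k, ((l : ℚ) - k) = (-1) ^ k * k.factorial := by
    have : ∀ l ∈ range k, ((l : ℚ) - k) = (-1) * ((k : ℚ) - l) := by intros; ring
    rw [Finset.prod_congr rfl this, Finset.prod_mul_distrib, Finset.prod_const,
      prod_sub_range, Finset.card_range]
  have h2 : ∏ l ∈ Ico (k+1) n, ((l : ℚ) - k) = (n - 1 - k).factorial := by
    rw [Finset.prod_Ico_eq_prod_range]
    have : ∀ m ∈ range (n - (k+1)), (((k + 1 + m : ℕ) : ℚ) - k) = ((0:ℚ) + m + 1) := by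
      intro m _; push_cast; ring
    rw [Finset.prod_congr rfl this]
    have h3 := prod_shift_s13 0 (n - (k+1))
    simp only [Nat.cast_zero] at h3
    rw [h3, show n - (k+1) + 0 = n - 1 - k by omega]
    simp
  rw [h1, h2]

lemma node_prod_F (n i k : ℕ) (hi : i < n) :
    ∏ m ∈ (range n).erase i, ((k : ℚ) + m + 1)
      = (n + k).factorial / (k.factorial * ((k : ℚ) + i + 1)) := by
  have hmem : i ∈ range n := mem_range.mpr hi
  have h := Finset.mul_prod_erase (range n) (fun m => ((k : ℚ) + m + 1)) hmem
  have hne : ((k : ℚ) + i + 1) ≠ 0 := by positivity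
  field_simp
  rw [show (∏ m ∈ (range n).erase i, ((k:ℚ) + m + 1)) * (k.factorial : ℚ) * ((k:ℚ) + i + 1)
      = (k.factorial : ℚ) * (((k:ℚ) + i + 1) * ∏ m ∈ (range n).erase i, ((k:ℚ) + m + 1)) by ring,
    h, prod_shift_s13]
  field_simp


noncomputable def Wf (n i k : ℕ) : ℚ :=
  (-1)^(i+k) * ((n+i+1).choose (n-k)) * ((n+k).choose (n-i-1)) *
    ((i+k).choose k) * ((i+1+k).choose k) * (i+1) * ((n-k : ℕ) : ℚ)

noncomputable def cc (n i : ℕ) : ℚ :=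
  (-1)^(n-1-i) * ((n+i+1) * (n+i).factorial) /
    (i.factorial * i.factorial * (n-1-i).factorial)

lemma entry (n i k : ℕ) (hi : i < n) (hk : k < n) :
    Wf n i k * ((-1)^k * k.factorial * (n-1-k).factorial)
      = cc n i * ((-1)^(n-1) * ((n+k).factorial / (k.factorial * ((k:ℚ) + i + 1)))) := by
  obtain ⟨a, ha⟩ : ∃ a, n = i + 1 + a := ⟨n - i - 1, by omega⟩
  obtain ⟨b, hb⟩ : ∃ b, n = k + 1 + b := ⟨n - k - 1, by omega⟩
  have h1 : n - k = b + 1 := by omega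
  have h2 : n - i - 1 = a := by omega
  have h3 : n - 1 - i = a := by omega
  have h4 : n - 1 - k = b := by omega
  have h5 : n - 1 = i + a := by omega
  rw [Wf, cc, h1, h2, h3, h4, h5]
  have hc1 : (((n+i+1).choose (b+1) : ℕ) : ℚ)
      = (n+i+1).factorial / ((b+1).factorial * (i+k+1).factorial) := by
    rw [Nat.cast_choose ℚ (by omega : b + 1 ≤ n+i+1), show n+i+1-(b+1) = i+k+1 by omega]
  have hc2 : (((n+k).choose a : ℕ) : ℚ)
      = (n+k).factorial / (a.factorial * (i+k+1).factorial) := by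
    rw [Nat.cast_choose ℚ (by omega : a ≤ n+k), show n+k-a = i+k+1 by omega]
  have hc3 : (((i+k).choose k : ℕ) : ℚ)
      = (i+k).factorial / (k.factorial * i.factorial) := by
    rw [Nat.cast_choose ℚ (by omega : k ≤ i+k), show i+k-k = i by omega]
  have hc4 : (((i+1+k).choose k : ℕ) : ℚ)
      = (i+1+k).factorial / (k.factorial * (i+1).factorial) := by
    rw [Nat.cast_choose ℚ (by omega : k ≤ i+1+k), show i+1+k-k = i+1 by omega]
  rw [hc1, hc2, hc3, hc4]
  have hf1 : (n+i+1).factorial = (n+i+1) * (n+i).factorial := Nat.factorial_succ _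
  have hf2 : (b+1).factorial = (b+1) * b.factorial := Nat.factorial_succ _
  have hf3 : (i+k+1).factorial = (i+k+1) * (i+k).factorial := Nat.factorial_succ _
  have hf4 : (i+1).factorial = (i+1) * i.factorial := Nat.factorial_succ _
  have hf5 : (i+1+k).factorial = (i+k+1) * (i+k).factorial := by
    rw [show i+1+k = (i+k)+1 by omega, Nat.factorial_succ]
  rw [hf1, hf2, hf3, hf4, hf5]
  have e1 : ((-1:ℚ))^(i+k) * (-1)^k = (-1)^i := by
    rw [← pow_add, show i+k+k = i+2*k by omega, pow_add, pow_mul]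
    norm_num
  have e2 : ((-1:ℚ))^a * (-1)^(i+a) = (-1)^i := by
    rw [← pow_add, show a+(i+a) = i+2*a by omega, pow_add, pow_mul]
    norm_num
  have hik1 : ((i:ℚ)+k+1) ≠ 0 := by positivity
  have hki1 : ((k:ℚ)+i+1) ≠ 0 := by positivity
  have hfq : ∀ m : ℕ, ((m.factorial : ℚ)) ≠ 0 := fun m => Nat.cast_ne_zero.mpr m.factorial_ne_zero
  push_cast
  have hb1 : ((b:ℚ)+1) ≠ 0 := by positivity
  have hi1 : ((i:ℚ)+1) ≠ 0 := by positivity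
  have main :
      ((↑n + ↑i + 1) * ((n + i).factorial : ℚ) /
            ((↑b + 1) * ↑b.factorial * ((↑i + ↑k + 1) * ↑(i + k).factorial))) *
          (↑(n + k).factorial / (↑a.factorial * ((↑i + ↑k + 1) * ↑(i + k).factorial))) *
          (↑(i + k).factorial / (↑k.factorial * ↑i.factorial)) *
          ((↑i + ↑k + 1) * ↑(i + k).factorial / (↑k.factorial * ((↑i + 1) * ↑i.factorial))) *
          (↑i + 1) * (↑b + 1) * (↑k.factorial * ↑b.factorial)
        = (↑n + ↑i + 1) * ((n + i).factorial : ℚ) / (↑i.factorial * ↑i.factorial * ↑a.factorial) *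
            (↑(n + k).factorial / (↑k.factorial * (↑k + ↑i + 1))) := by
    have h6 := hfq (n+i); have h7 := hfq (n+k); have h8 := hfq (i+k)
    have h9 := hfq i; have h10 := hfq k; have h11 := hfq a; have h12 := hfq b
    field_simp
    ring
  calc ((-1:ℚ)) ^ (i + k) *
          ((↑n + ↑i + 1) * ↑(n + i).factorial /
            ((↑b + 1) * ↑b.factorial * ((↑i + ↑k + 1) * ↑(i + k).factorial))) *
          (↑(n + k).factorial / (↑a.factorial * ((↑i + ↑k + 1) * ↑(i + k).factorial))) *
          (↑(i + k).factorial / (↑k.factorial * ↑i.factorial)) *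
          ((↑i + ↑k + 1) * ↑(i + k).factorial / (↑k.factorial * ((↑i + 1) * ↑i.factorial))) *
          (↑i + 1) * (↑b + 1) *
          ((-1) ^ k * ↑k.factorial * ↑b.factorial)
      = ((-1:ℚ)) ^ (i+k) * (-1) ^ k *
          (((↑n + ↑i + 1) * ↑(n + i).factorial /
            ((↑b + 1) * ↑b.factorial * ((↑i + ↑k + 1) * ↑(i + k).factorial))) *
          (↑(n + k).factorial / (↑a.factorial * ((↑i + ↑k + 1) * ↑(i + k).factorial))) *
          (↑(i + k).factorial / (↑k.factorial * ↑i.factorial)) *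
          ((↑i + ↑k + 1) * ↑(i + k).factorial / (↑k.factorial * ((↑i + 1) * ↑i.factorial))) *
          (↑i + 1) * (↑b + 1) * (↑k.factorial * ↑b.factorial)) := by ring
    _ = ((-1:ℚ)) ^ i *
          (((↑n + ↑i + 1) * ↑(n + i).factorial /
            ((↑b + 1) * ↑b.factorial * ((↑i + ↑k + 1) * ↑(i + k).factorial))) *
          (↑(n + k).factorial / (↑a.factorial * ((↑i + ↑k + 1) * ↑(i + k).factorial))) *
          (↑(i + k).factorial / (↑k.factorial * ↑i.factorial)) *
          ((↑i + ↑k + 1) * ↑(i + k).factorial / (↑k.factorial * ((↑i + 1) * ↑i.factorial))) *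
          (↑i + 1) * (↑b + 1) * (↑k.factorial * ↑b.factorial)) := by rw [e1]
    _ = ((-1:ℚ)) ^ i *
          ((↑n + ↑i + 1) * ↑(n + i).factorial / (↑i.factorial * ↑i.factorial * ↑a.factorial) *
            (↑(n + k).factorial / (↑k.factorial * (↑k + ↑i + 1)))) := by rw [main]
    _ = ((-1:ℚ)) ^ a * (-1) ^ (i+a) *
          ((↑n + ↑i + 1) * ↑(n + i).factorial / (↑i.factorial * ↑i.factorial * ↑a.factorial) *
            (↑(n + k).factorial / (↑k.factorial * (↑k + ↑i + 1)))) := by rw [e2]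
    _ = (-1) ^ a * ((↑n + ↑i + 1) * ↑(n + i).factorial) / (↑i.factorial * ↑i.factorial * ↑a.factorial) *
          ((-1) ^ (i + a) * (↑(n + k).factorial / (↑k.factorial * (↑k + ↑i + 1)))) := by ring

lemma deg_helper (s : Finset ℕ) (w : ℚ) (g : ℕ → ℚ) (k : ℕ) (hk : k ∈ s) :
    (Polynomial.C w * ∏ l ∈ s.erase k, (Polynomial.X - Polynomial.C (g l))).degree
      < ((s.card : ℕ) : WithBot ℕ) := by
  have hdeg : (∏ l ∈ s.erase k, (X - C (g l))).natDegree = s.card - 1 := by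
    rw [Polynomial.natDegree_prod _ _ (fun l _ => Polynomial.X_sub_C_ne_zero (g l))]
    simp [Polynomial.natDegree_X_sub_C, Finset.card_erase_of_mem hk]
  have hdle : (∏ l ∈ s.erase k, (X - C (g l))).degree ≤ ((s.card - 1 : ℕ) : WithBot ℕ) := by
    rw [← hdeg]; exact Polynomial.degree_le_natDegree
  calc (C w * ∏ l ∈ s.erase k, (X - C (g l))).degree
      ≤ (C w).degree + (∏ l ∈ s.erase k, (X - C (g l))).degree := Polynomial.degree_mul_le _ _
    _ ≤ 0 + ((s.card - 1 : ℕ) : WithBot ℕ) := add_le_add Polynomial.degree_C_le hdle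
    _ = ((s.card - 1 : ℕ) : WithBot ℕ) := zero_add _
    _ < ((s.card : ℕ) : WithBot ℕ) := by
        exact_mod_cast Nat.sub_lt (Finset.card_pos.mpr ⟨k, hk⟩) one_pos

lemma PQ_eq (n i : ℕ) (hi : i < n) :
    (∑ k ∈ range n, Polynomial.C (Wf n i k) * ∏ l ∈ (range n).erase k, (X - C (-(l:ℚ))))
      = C (cc n i) * ∏ m ∈ (range n).erase i, (X - C ((m:ℚ)+1)) := by
  have hinj : Set.InjOn (fun k : ℕ => -(k:ℚ)) (range n : Finset ℕ) := by
    intro x _ y _ h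
    simp only [neg_inj, Nat.cast_inj] at h
    exact h
  refine Polynomial.eq_of_degrees_lt_of_eval_index_eq (v := fun k : ℕ => -(k:ℚ)) (range n)
    hinj ?_ ?_ ?_
  · refine lt_of_le_of_lt (Polynomial.degree_sum_le _ _) ?_
    rw [Finset.sup_lt_iff (by simp [Finset.card_range] : (⊥ : WithBot ℕ) < (#(range n) : ℕ))]
    intro k hk
    have := deg_helper (range n) (Wf n i k) (fun l => -(l:ℚ)) k hk
    simpa using this
  · have := deg_helper (range n) (cc n i) (fun m => (m:ℚ)+1) i (mem_range.mpr hi)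
    simpa using this
  · intro k hk
    have hkn : k < n := mem_range.mp hk
    simp only [Polynomial.eval_finset_sum, Polynomial.eval_mul, Polynomial.eval_prod,
      Polynomial.eval_sub, Polynomial.eval_X, Polynomial.eval_C]
    rw [Finset.sum_eq_single_of_mem k hk (fun k' hk' hne => by
      refine mul_eq_zero_of_right _ (Finset.prod_eq_zero (Finset.mem_erase.mpr ⟨hne.symm, hk⟩) ?_)
      ring)]
    have hprodL : ∏ l ∈ (range n).erase k, (-(k:ℚ) - (-(l:ℚ))) = ∏ l ∈ (range n).erase k, ((l:ℚ) - k) :=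
      Finset.prod_congr rfl (fun l _ => by ring)
    have hprodR : ∏ m ∈ (range n).erase i, (-(k:ℚ) - ((m:ℚ)+1))
        = (-1)^(n-1) * ((n + k).factorial / (k.factorial * ((k:ℚ) + i + 1))) := by
      have h1 : ∏ m ∈ (range n).erase i, (-(k:ℚ) - ((m:ℚ)+1))
          = ∏ m ∈ (range n).erase i, ((-1) * ((k:ℚ) + m + 1)) :=
        Finset.prod_congr rfl (fun m _ => by ring)
      rw [h1, Finset.prod_mul_distrib, Finset.prod_const, Finset.card_erase_of_mem
        (mem_range.mpr hi), Finset.card_range, node_prod_F n i k hi]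
    rw [hprodL, node_prod_E n k hkn, hprodR]
    exact entry n i k hi hkn

lemma key (n i j : ℕ) (hi : i < n) (hj : j < n) :
    ∑ k ∈ range n, Wf n i k / ((k:ℚ) + j + 1)
      = if i = j then ((n:ℚ) + j + 1) else 0 := by
  have hPQ := PQ_eq n i hi
  have hev := congrArg (Polynomial.eval ((j:ℚ) + 1)) hPQ
  simp only [Polynomial.eval_finset_sum, Polynomial.eval_mul, Polynomial.eval_prod,
    Polynomial.eval_sub, Polynomial.eval_X, Polynomial.eval_C] at hev
  -- normalize the left-hand evaluation
  have hL : ∀ k ∈ range n,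
      Wf n i k * ∏ l ∈ (range n).erase k, ((j:ℚ) + 1 - (-(l:ℚ)))
        = Wf n i k * ∏ l ∈ (range n).erase k, ((j:ℚ) + l + 1) := by
    intro k _
    exact congrArg _ (Finset.prod_congr rfl (fun l _ => by ring))
  rw [Finset.sum_congr rfl hL] at hev
  set F : ℚ := ∏ l ∈ range n, ((j:ℚ) + l + 1) with hF
  have hFval : F = (n + j).factorial / j.factorial := prod_shift_s13 j n
  have hFne : F ≠ 0 := by
    rw [hFval]; exact div_ne_zero (factQ_ne _) (factQ_ne _)
  have hsum : (∑ k ∈ range n, Wf n i k / ((k:ℚ) + j + 1)) * F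
      = ∑ k ∈ range n, Wf n i k * ∏ l ∈ (range n).erase k, ((j:ℚ) + l + 1) := by
    rw [Finset.sum_mul]
    refine Finset.sum_congr rfl (fun k hk => ?_)
    have hmem : k ∈ range n := hk
    have hsplit : F = ((j:ℚ) + k + 1) * ∏ l ∈ (range n).erase k, ((j:ℚ) + l + 1) :=
      (Finset.mul_prod_erase (range n) (fun l => ((j:ℚ) + l + 1)) hmem).symm
    have hne : ((j:ℚ) + k + 1) ≠ 0 := by positivity
    rw [hsplit]
    field_simp
    ring
  rw [hev] at hsum
  -- now compute the RHS evaluation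
  by_cases hij : i = j
  · subst hij
    have hprod : ∏ m ∈ (range n).erase i, ((i:ℚ) + 1 - ((m:ℚ)+1))
        = (-1)^(n-1) * ((-1) ^ i * i.factorial * (n - 1 - i).factorial) := by
      have h1 : ∏ m ∈ (range n).erase i, ((i:ℚ) + 1 - ((m:ℚ)+1))
          = ∏ m ∈ (range n).erase i, ((-1) * ((m:ℚ) - i)) :=
        Finset.prod_congr rfl (fun m _ => by ring)
      rw [h1, Finset.prod_mul_distrib, Finset.prod_const, Finset.card_erase_of_mem
        (mem_range.mpr hi), Finset.card_range, node_prod_E n i hi]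
    rw [hprod] at hsum
    obtain ⟨a, ha⟩ : ∃ a, n = i + 1 + a := ⟨n - i - 1, by omega⟩
    have h3 : n - 1 - i = a := by omega
    have h5 : n - 1 = i + a := by omega
    rw [cc, h3, h5, hFval] at hsum
    have hsign : ((-1:ℚ))^a * ((-1:ℚ))^(i+a) * ((-1:ℚ))^i = 1 := by
      rw [← pow_add, ← pow_add, show a + (i+a) + i = 2*(a+i) by ring, pow_mul]
      norm_num
    have h9 := factQ_ne i
    have h11 := factQ_ne a
    have hval : ((-1:ℚ))^a * (((n:ℚ) + i + 1) * ((n + i).factorial : ℚ)) /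
          ((i.factorial : ℚ) * (i.factorial : ℚ) * (a.factorial : ℚ)) *
          (((-1:ℚ))^(i+a) * (((-1:ℚ))^i * (i.factorial : ℚ) * (a.factorial : ℚ)))
        = ((n:ℚ) + i + 1) * (((n + i).factorial : ℚ) / (i.factorial : ℚ)) := by
      calc ((-1:ℚ))^a * (((n:ℚ) + i + 1) * ((n + i).factorial : ℚ)) /
            ((i.factorial : ℚ) * (i.factorial : ℚ) * (a.factorial : ℚ)) *
            (((-1:ℚ))^(i+a) * (((-1:ℚ))^i * (i.factorial : ℚ) * (a.factorial : ℚ)))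
          = (((-1:ℚ))^a * ((-1:ℚ))^(i+a) * ((-1:ℚ))^i) *
            ((((n:ℚ) + i + 1) * ((n + i).factorial : ℚ)) /
              ((i.factorial : ℚ) * (i.factorial : ℚ) * (a.factorial : ℚ)) *
              ((i.factorial : ℚ) * (a.factorial : ℚ))) := by ring
        _ = (((n:ℚ) + i + 1) * ((n + i).factorial : ℚ)) /
              ((i.factorial : ℚ) * (i.factorial : ℚ) * (a.factorial : ℚ)) *
              ((i.factorial : ℚ) * (a.factorial : ℚ)) := by rw [hsign, one_mul]
        _ = ((n:ℚ) + i + 1) * (((n + i).factorial : ℚ) / (i.factorial : ℚ)) := by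
            field_simp
    rw [hval] at hsum
    rw [if_pos rfl]
    exact mul_right_cancel₀ (div_ne_zero (factQ_ne _) (factQ_ne _)) hsum
  · rw [if_neg hij]
    have hzero : ∏ m ∈ (range n).erase i, ((j:ℚ) + 1 - ((m:ℚ)+1)) = 0 := by
      refine Finset.prod_eq_zero (Finset.mem_erase.mpr ⟨fun h => hij h.symm, mem_range.mpr hj⟩) ?_
      ring
    rw [hzero, mul_zero] at hsum
    have := mul_eq_zero.mp hsum
    rcases this with h | h
    · exact h
    · exact absurd h hFne


lemma choose2_cast (s : ℕ) : (((s+2).choose 2 : ℕ) : ℚ) = ((s:ℚ)+1) * ((s:ℚ)+2) / 2 := by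
  induction s with
  | zero => norm_num
  | succ s ih =>
      have h : (s+1+2).choose 2 = (s+2).choose 2 + (s+2) := by
        rw [show s+1+2 = (s+2)+1 by omega, Nat.choose_succ_succ (s+2) 1, Nat.choose_one_right,
          Nat.add_comm]
      rw [h]
      push_cast
      rw [ih]
      ring

lemma tri_swap (f : ℕ → ℕ → ℚ) (n : ℕ) :
    ∑ m ∈ range n, ∑ k ∈ range (m+1), f m k
      = ∑ k ∈ range n, ∑ m ∈ Ico k n, f m k := by
  induction n with
  | zero => simp
  | succ n ih =>
      rw [Finset.sum_range_succ, ih, Finset.sum_range_succ (fun k => ∑ m ∈ Ico k (n+1), f m k)]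
      have h1 : ∀ k ∈ range n, ∑ m ∈ Ico k (n+1), f m k = (∑ m ∈ Ico k n, f m k) + f n k := by
        intro k hk
        exact Finset.sum_Ico_succ_top (le_of_lt (mem_range.mp hk)) _
      rw [Finset.sum_congr rfl h1, Nat.Ico_succ_singleton, Finset.sum_singleton,
        Finset.sum_add_distrib, Finset.sum_range_succ (fun k => f n k)]
      ring

lemma telescope (j k n : ℕ) (hk : k ≤ n) :
    ∑ m ∈ Ico k n, (2:ℚ) / (((m:ℚ)+j+1) * ((m:ℚ)+j+2))
      = 2 / ((k:ℚ)+j+1) - 2 / ((n:ℚ)+j+1) := by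
  induction n, hk using Nat.le_induction with
  | base => simp
  | succ n hk ih =>
      rw [Finset.sum_Ico_succ_top hk, ih]
      have h1 : ((n:ℚ)+j+1) ≠ 0 := by positivity
      have h2 : ((n:ℚ)+j+2) ≠ 0 := by positivity
      have h3 : (((n+1:ℕ):ℚ)+j+1) = ((n:ℚ)+j+2) := by push_cast; ring
      rw [h3]
      field_simp
      ring

lemma even_choose (a b : ℕ) (ha : Even a) (hb : Odd b) : 2 ∣ a.choose b := by
  rcases lt_or_ge a b with h | h
  · rw [Nat.choose_eq_zero_of_lt h]; exact dvd_zero 2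
  · have hb1 : 1 ≤ b := hb.pos
    have ha1 : 1 ≤ a := le_trans hb1 h
    have hmc := Nat.add_one_mul_choose_eq (a-1) (b-1)
    rw [show a - 1 + 1 = a by omega,
      show b - 1 + 1 = b by omega] at hmc
    have h2a : 2 ∣ a * (a-1).choose (b-1) := Dvd.dvd.mul_right ha.two_dvd _
    rw [hmc] at h2a
    rcases (Nat.Prime.dvd_mul Nat.prime_two).mp h2a with h' | h'
    · exact h'
    · exact absurd (even_iff_two_dvd.mpr h') (Nat.not_even_iff_odd.mpr hb)

lemma two_dvd_N (n i k : ℕ) (hi : i < n) (hk : k < n) :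
    2 ∣ (n+i+1).choose (n-k) * ((n+k).choose (n-i-1)) * ((i+k).choose k) *
      ((i+1+k).choose k) * (i+1) := by
  rcases Nat.even_or_odd i with hie | hio
  · -- i even
    rcases Nat.even_or_odd k with hke | hko
    · -- k even
      rcases Nat.even_or_odd n with hne | hno
      · -- n even : use (n+k).choose (n-i-1)
        have h : 2 ∣ (n+k).choose (n-i-1) := by
          refine even_choose _ _ (hne.add hke) ?_
          obtain ⟨x, hx⟩ := hne; obtain ⟨y, hy⟩ := hie
          exact ⟨x - y - 1, by omega⟩
        exact Dvd.dvd.mul_right (Dvd.dvd.mul_right (Dvd.dvd.mul_right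
          (Dvd.dvd.mul_left h _) _) _) _
      · -- n odd : use (n+i+1).choose (n-k)
        have h : 2 ∣ (n+i+1).choose (n-k) := by
          refine even_choose _ _ ?_ ?_
          · obtain ⟨x, hx⟩ := hno; obtain ⟨y, hy⟩ := hie
            exact ⟨x + y + 1, by omega⟩
          · obtain ⟨x, hx⟩ := hno; obtain ⟨y, hy⟩ := hke
            exact ⟨x - y, by omega⟩
        exact Dvd.dvd.mul_right (Dvd.dvd.mul_right (Dvd.dvd.mul_right
          (Dvd.dvd.mul_right h _) _) _) _
    · -- k odd : use (i+1+k).choose k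
      have h : 2 ∣ (i+1+k).choose k := by
        refine even_choose _ _ ?_ hko
        obtain ⟨x, hx⟩ := hie; obtain ⟨y, hy⟩ := hko
        exact ⟨x + y + 1, by omega⟩
      exact Dvd.dvd.mul_right (Dvd.dvd.mul_left h _) _
  · -- i odd
    have h : 2 ∣ (i+1) := hio.add_one.two_dvd
    exact Dvd.dvd.mul_left h _


/-- Let `a_k = C(k+1,2) = k(k+1)/2`.  The matrix `A(n)` with entries
`A_{ij}(n) = Σ_{k=0}^{j-1} (-1)^{i+k+1} C(n+i, n-k) C(n+k, n-i) C(i+k-1, k) C(i+k, k) · i/2`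
has integer entries, and is the inverse of the matrix `R_n(a_k)` whose `(i,j)` entry
is `1/a_{i+j-1} = 1/C(i+j, 2)`.  (Indices `i, j` run from `1` to `n`; here `Fin n`
is used, so `i` corresponds to `i.1 + 1` and `j` to `j.1 + 1`.) -/
theorem A_matrix_inverse (n : ℕ) (hn : 1 ≤ n)
    (R A : Matrix (Fin n) (Fin n) ℚ)
    (hR : ∀ i j : Fin n, R i j = 1 / (Nat.choose (i.1 + j.1 + 2) 2 : ℚ))
    (hA : ∀ i j : Fin n, A i j = ∑ k ∈ Finset.range (j.1 + 1),
      (-1 : ℚ) ^ (i.1 + 1 + k + 1) * ((n + i.1 + 1).choose (n - k) : ℚ) *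
        ((n + k).choose (n - i.1 - 1) : ℚ) * ((i.1 + k).choose k : ℚ) *
        ((i.1 + 1 + k).choose k : ℚ) * ((i.1 + 1 : ℕ) : ℚ) / 2) :
    (∀ i j : Fin n, ∃ z : ℤ, A i j = (z : ℚ)) ∧ A * R = 1 ∧ R * A = 1 := by
  have hAR : A * R = 1 := by
    ext i j
    have hi : i.1 < n := i.isLt
    have hj : j.1 < n := j.isLt
    set t : ℕ → ℚ := fun k =>
      (-1 : ℚ) ^ (i.1 + 1 + k + 1) * ((n + i.1 + 1).choose (n - k) : ℚ) *
        ((n + k).choose (n - i.1 - 1) : ℚ) * ((i.1 + k).choose k : ℚ) *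
        ((i.1 + 1 + k).choose k : ℚ) * ((i.1 + 1 : ℕ) : ℚ) / 2 with ht
    have e1 : (A * R) i j = ∑ m ∈ range n,
        (∑ k ∈ range (m+1), t k) * (1 / (((m + j.1 + 2).choose 2 : ℕ) : ℚ)) := by
      rw [Matrix.mul_apply,
        ← Fin.sum_univ_eq_sum_range
          (fun m => (∑ k ∈ range (m+1), t k) * (1 / (((m + j.1 + 2).choose 2 : ℕ) : ℚ))) n]
      exact Finset.sum_congr rfl fun m _ => by rw [hA, hR]
    have e2 : ∀ m ∈ range n, (∑ k ∈ range (m+1), t k) * (1 / (((m + j.1 + 2).choose 2 : ℕ) : ℚ))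
        = ∑ k ∈ range (m+1), t k * ((2:ℚ) / (((m:ℚ) + j.1 + 1) * ((m:ℚ) + j.1 + 2))) := by
      intro m _
      rw [Finset.sum_mul]
      refine Finset.sum_congr rfl fun k _ => ?_
      have h2 : (((m + j.1 + 2).choose 2 : ℕ) : ℚ)
          = ((m:ℚ) + j.1 + 1) * ((m:ℚ) + j.1 + 2) / 2 := by
        rw [choose2_cast (m + j.1)]
        push_cast
        ring
      rw [h2]
      have hp : ((m:ℚ) + j.1 + 1) * ((m:ℚ) + j.1 + 2) ≠ 0 := by positivity
      field_simp
    have e3 : (A * R) i j = ∑ k ∈ range n, t k *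
        (∑ m ∈ Ico k n, (2:ℚ) / (((m:ℚ) + j.1 + 1) * ((m:ℚ) + j.1 + 2))) := by
      rw [e1, Finset.sum_congr rfl e2,
        tri_swap (fun m k => t k * ((2:ℚ) / (((m:ℚ) + j.1 + 1) * ((m:ℚ) + j.1 + 2)))) n]
      exact Finset.sum_congr rfl fun k _ => (Finset.mul_sum _ _ _).symm
    have e4 : ∀ k ∈ range n, t k *
        (∑ m ∈ Ico k n, (2:ℚ) / (((m:ℚ) + j.1 + 1) * ((m:ℚ) + j.1 + 2)))
        = (Wf n i.1 k / ((k:ℚ) + j.1 + 1)) * (1 / ((n:ℚ) + j.1 + 1)) := by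
      intro k hk
      have hkn : k < n := mem_range.mp hk
      rw [telescope j.1 k n hkn.le, ht]
      simp only
      rw [show i.1 + 1 + k + 1 = (i.1 + k) + 2 by omega, pow_add, neg_one_sq, mul_one, Wf]
      have hx : ((k:ℚ) + j.1 + 1) ≠ 0 := by positivity
      have hy : ((n:ℚ) + j.1 + 1) ≠ 0 := by positivity
      have hsub : ((n - k : ℕ) : ℚ) = (n:ℚ) - (k:ℚ) := by
        rw [Nat.cast_sub hkn.le]
      rw [hsub]
      field_simp
      push_cast
      ring
    have e5 : (A * R) i j = (if i.1 = j.1 then ((n:ℚ) + j.1 + 1) else 0) * (1 / ((n:ℚ) + j.1 + 1)) := by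
      rw [e3, Finset.sum_congr rfl e4, ← Finset.sum_mul, key n i.1 j.1 hi hj]
    rw [e5, Matrix.one_apply]
    have hy : ((n:ℚ) + j.1 + 1) ≠ 0 := by positivity
    by_cases hij : i = j
    · rw [if_pos hij, if_pos (by rw [hij])]
      field_simp
    · rw [if_neg hij, if_neg (fun h => hij (Fin.ext h))]
      simp
  refine ⟨?_, hAR, mul_eq_one_comm.mp hAR⟩
  intro i j
  set N : ℕ → ℕ := fun k => (n+i.1+1).choose (n-k) * ((n+k).choose (n-i.1-1)) *
      ((i.1+k).choose k) * ((i.1+1+k).choose k) * (i.1+1) with hN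
  refine ⟨∑ k ∈ range (j.1+1), (-1:ℤ)^(i.1+k) * ((N k / 2 : ℕ) : ℤ), ?_⟩
  rw [hA]
  have hz : ((∑ k ∈ range (j.1+1), (-1:ℤ)^(i.1+k) * ((N k / 2 : ℕ) : ℤ) : ℤ) : ℚ)
      = ∑ k ∈ range (j.1+1), (-1:ℚ)^(i.1+k) * (((N k / 2 : ℕ) : ℤ) : ℚ) := by
    push_cast
    rfl
  rw [hz]
  refine Finset.sum_congr rfl fun k hk => ?_
  have hkn : k < n := lt_of_lt_of_le (mem_range.mp hk) j.isLt
  have hdvd := two_dvd_N n i.1 k i.isLt hkn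
  have hdvd2 : 2 ∣ N k := by rw [hN]; exact hdvd
  have hcast : (((N k / 2 : ℕ) : ℤ) : ℚ) = ((N k : ℕ) : ℚ) / 2 := by
    rw [Int.cast_natCast, Nat.cast_div hdvd2 (by norm_num)]; norm_num
  rw [hcast]
  simp only [hN]
  push_cast
  rw [show i.1 + 1 + k + 1 = (i.1 + k) + 2 by omega, pow_add, neg_one_sq, mul_one]
  ring
end

section
/- For all integers n ≥ 1, 1 ≤ i ≤ n, and 0 ≤ k ≤ n−1, the integer i · C(n+i, n−k) · C(n+k, n−i) · C(i+k−1, k) · C(i+k, k) is even. -/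
lemma even_choose_aux {a b : ℕ} (ha : a % 2 = 0) (hb : b % 2 = 1) :
    2 ∣ a.choose b := by
  rcases Nat.eq_zero_or_pos a with rfl | hpos
  · obtain ⟨b', rfl⟩ : ∃ c, b = c + 1 := ⟨b - 1, by omega⟩
    simp
  · obtain ⟨a', rfl⟩ : ∃ c, a = c + 1 := ⟨a - 1, by omega⟩
    obtain ⟨b', rfl⟩ : ∃ c, b = c + 1 := ⟨b - 1, by omega⟩
    have h := Nat.add_one_mul_choose_eq a' b'
    have h2 : 2 ∣ (a' + 1).choose (b' + 1) * (b' + 1) := by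
      rw [← h]; exact Dvd.dvd.mul_right (by omega) _
    rcases (Nat.prime_two.dvd_mul.mp h2) with h3 | h3
    · exact h3
    · omega

/-- For `n ≥ 1`, `1 ≤ i ≤ n` and `0 ≤ k ≤ n-1`, the integer
`i · C(n+i, n-k) · C(n+k, n-i) · C(i+k-1, k) · C(i+k, k)` is even. -/
theorem A_summand_even (n i k : ℕ) (hn : 1 ≤ n) (hi1 : 1 ≤ i) (hin : i ≤ n)
    (hk : k ≤ n - 1) :
    2 ∣ i * (n + i).choose (n - k) * (n + k).choose (n - i) *
        (i + k - 1).choose k * (i + k).choose k := by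
  rcases Nat.even_or_odd i with hi | hi
  · obtain ⟨m, rfl⟩ := hi
    have h2 : (2:ℕ) ∣ m + m := ⟨m, by ring⟩
    exact Dvd.dvd.mul_right (Dvd.dvd.mul_right (Dvd.dvd.mul_right
      (Dvd.dvd.mul_right h2 _) _) _) _
  · have hi2 : i % 2 = 1 := Nat.odd_iff.mp hi
    rcases Nat.even_or_odd k with hke | hko
    · have hk2 : k % 2 = 0 := Nat.even_iff.mp hke
      rcases Nat.even_or_odd n with hne | hno
      · -- n even, i odd, k even : C(n+k, n-i) is even
        have hn2 : n % 2 = 0 := Nat.even_iff.mp hne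
        have : 2 ∣ (n + k).choose (n - i) :=
          even_choose_aux (by omega) (by omega)
        exact Dvd.dvd.mul_right (Dvd.dvd.mul_right (Dvd.dvd.mul_left this _) _) _
      · -- n odd, i odd, k even : C(n+i, n-k) is even
        have hn2 : n % 2 = 1 := Nat.odd_iff.mp hno
        have : 2 ∣ (n + i).choose (n - k) :=
          even_choose_aux (by omega) (by omega)
        exact Dvd.dvd.mul_right (Dvd.dvd.mul_right (Dvd.dvd.mul_right
          (Dvd.dvd.mul_left this _) _) _) _
    · -- k odd, i odd : C(i+k, k) is even
      have hk2 : k % 2 = 1 := Nat.odd_iff.mp hko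
      have : 2 ∣ (i + k).choose k := even_choose_aux (by omega) hk2
      exact Dvd.dvd.mul_left this _
end

section
/- Let r ≥ 1 be an integer and n ≥ 1, and define B_{ij}(n,r) = Σ_{k=0}^{j-1} (−1)^{i+k+1} C(n+i+r−2, i) C(n, i) C(n+k+r−2, k) C(n, k) · i² · (∏_{l=0}^{r-3} (i+j+l)) / (r · ∏_{l=0}^{r-2} (i+k+l)) ∈ ℚ, where an empty product equals 1. Then the matrix B(n,r) is symmetric: B_{ij}(n,r) = B_{ji}(n,r) for all 1 ≤ i,j ≤ n. -/
private def cQ (n r m : ℕ) : ℚ := ((n + m + r - 2).choose m : ℚ) * (n.choose m : ℚ)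

private def DQ (r i k : ℕ) : ℚ := ∏ l ∈ Finset.range (r - 1), ((i + k + l : ℕ) : ℚ)

private def gQ (n r i k : ℕ) : ℚ :=
  (-1 : ℚ) ^ (i + k + 1) * cQ n r i * cQ n r k * (i : ℚ) ^ 2 / DQ r i k

private lemma cN_succ (n r m : ℕ) (hr : 1 ≤ r) (hn : 1 ≤ n) :
    (n + (m + 1) + r - 2).choose (m + 1) * n.choose (m + 1) * (m + 1) ^ 2 =
      (n + m + r - 2).choose m * n.choose m * ((n + m + r - 1) * (n - m)) := by
  have ha : n + (m + 1) + r - 2 = (n + m + r - 2) + 1 := by omega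
  have h1 : ((n + m + r - 2) + 1).choose (m + 1) * (m + 1) =
      ((n + m + r - 2) + 1) * (n + m + r - 2).choose m :=
    (Nat.add_one_mul_choose_eq _ _).symm
  have h2 : n.choose (m + 1) * (m + 1) = n.choose m * (n - m) :=
    Nat.choose_succ_right_eq n m
  have hb : (n + m + r - 2) + 1 = n + m + r - 1 := by omega
  calc (n + (m + 1) + r - 2).choose (m + 1) * n.choose (m + 1) * (m + 1) ^ 2
      = (((n + m + r - 2) + 1).choose (m + 1) * (m + 1)) * (n.choose (m + 1) * (m + 1)) := by
        rw [ha]; ring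
    _ = (((n + m + r - 2) + 1) * (n + m + r - 2).choose m) * (n.choose m * (n - m)) := by
        rw [h1, h2]
    _ = _ := by rw [hb]; ring

private lemma DQ_symm (r i k : ℕ) : DQ r i k = DQ r k i := by
  unfold DQ
  exact Finset.prod_congr rfl (fun l _ => by rw [Nat.add_comm i k])

private lemma DQ_succ (r i k : ℕ) : DQ r (i + 1) k = DQ r i (k + 1) := by
  unfold DQ
  exact Finset.prod_congr rfl (fun l _ => by congr 2; omega)

private lemma DQ_ne_zero (r i k : ℕ) (h : 1 ≤ i + k) : DQ r i k ≠ 0 := by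
  unfold DQ
  apply Finset.prod_ne_zero_iff.mpr
  intro l _
  have : 0 < i + k + l := by omega
  exact_mod_cast this.ne'

private lemma DQ_rel (r i k : ℕ) (hr : 1 ≤ r) :
    ((i + k : ℕ) : ℚ) * DQ r i (k + 1) = ((i + k + r - 1 : ℕ) : ℚ) * DQ r i k := by
  obtain ⟨m, rfl⟩ := Nat.exists_eq_add_of_le hr
  unfold DQ
  have hN : (i + k) * ∏ l ∈ Finset.range m, (i + (k + 1) + l) =
      (i + k + m) * ∏ l ∈ Finset.range m, (i + k + l) := by
    have e1 : ∏ l ∈ Finset.range (m + 1), (i + k + l) =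
        (∏ l ∈ Finset.range m, (i + k + (l + 1))) * (i + k + 0) :=
      Finset.prod_range_succ' (fun l => i + k + l) m
    have e2 : ∏ l ∈ Finset.range (m + 1), (i + k + l) =
        (∏ l ∈ Finset.range m, (i + k + l)) * (i + k + m) :=
      Finset.prod_range_succ _ m
    have e3 : ∏ l ∈ Finset.range m, (i + (k + 1) + l) =
        ∏ l ∈ Finset.range m, (i + k + (l + 1)) :=
      Finset.prod_congr rfl (fun l _ => by omega)
    rw [e3]
    calc (i + k) * ∏ l ∈ Finset.range m, (i + k + (l + 1))
        = (∏ l ∈ Finset.range m, (i + k + (l + 1))) * (i + k + 0) := by ring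
      _ = ∏ l ∈ Finset.range (m + 1), (i + k + l) := e1.symm
      _ = (∏ l ∈ Finset.range m, (i + k + l)) * (i + k + m) := e2
      _ = _ := by ring
  have h1 : 1 + m - 1 = m := by omega
  have h2 : i + k + (1 + m) - 1 = i + k + m := by omega
  rw [h1, h2]
  exact_mod_cast hN

private lemma cQ_succ (n r m : ℕ) (hr : 1 ≤ r) (hn : 1 ≤ n) (hm : m ≤ n) :
    cQ n r (m + 1) * ((m : ℚ) + 1) ^ 2 =
      cQ n r m * ((n : ℚ) + m + r - 1) * ((n : ℚ) - m) := by
  have h := cN_succ n r m hr hn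
  have hc := congrArg (fun x : ℕ => (x : ℚ)) h
  push_cast at hc
  unfold cQ
  rw [show ((n : ℚ) + m + r - 1) = ((n + m + r - 1 : ℕ) : ℚ) by
    push_cast [Nat.cast_sub (show 1 ≤ n + m + r by omega)]; ring]
  rw [show ((n : ℚ) - m) = ((n - m : ℕ) : ℚ) by
    push_cast [Nat.cast_sub hm]; ring]
  push_cast
  linarith [hc]

private lemma cQ_zero (n r m : ℕ) (h : n < m) : cQ n r m = 0 := by
  unfold cQ
  rw [Nat.choose_eq_zero_of_lt h]
  simp

private lemma gQ_zero (n r k : ℕ) : gQ n r 0 k = 0 := by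
  simp [gQ]

private lemma step_s17 (n r : ℕ) (hr : 1 ≤ r) (hn : 1 ≤ n) (i j : ℕ) :
    gQ n r (i + 1) j - gQ n r i j = gQ n r (j + 1) i - gQ n r j i := by
  by_cases hin : n < i
  · have h1 : cQ n r i = 0 := cQ_zero n r i hin
    have h2 : cQ n r (i + 1) = 0 := cQ_zero n r (i + 1) (by omega)
    simp [gQ, h1, h2]
  by_cases hjn : n < j
  · have h1 : cQ n r j = 0 := cQ_zero n r j hjn
    have h2 : cQ n r (j + 1) = 0 := cQ_zero n r (j + 1) (by omega)
    simp [gQ, h1, h2]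
  by_cases hij : i = j
  · subst hij; rfl
  push_neg at hin hjn
  have hij1 : 1 ≤ i + j := by omega
  have hA : DQ r i j ≠ 0 := DQ_ne_zero r i j hij1
  have hA' : DQ r i (j + 1) ≠ 0 := DQ_ne_zero r i (j + 1) (by omega)
  have hijQ : ((i : ℚ) + j) ≠ 0 := by
    have : (0 : ℚ) < (i : ℚ) + j := by exact_mod_cast hij1
    linarith
  have hc1 := cQ_succ n r i hr hn hin
  have hc2 := cQ_succ n r j hr hn hjn
  have hR := DQ_rel r i j hr
  rw [show ((i + j + r - 1 : ℕ) : ℚ) = (i : ℚ) + j + r - 1 by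
    push_cast [Nat.cast_sub (show 1 ≤ i + j + r by omega)]; ring] at hR
  push_cast at hR
  unfold gQ
  rw [DQ_succ r i j, DQ_symm r (j + 1) i, DQ_symm r j i]
  push_cast
  rw [div_sub_div _ _ hA' hA, div_sub_div _ _ hA' hA,
    div_eq_div_iff (mul_ne_zero hA' hA) (mul_ne_zero hA' hA)]
  linear_combination ((-1 : ℚ) ^ i * (-1) ^ j) * (DQ r i j * DQ r i (j + 1)) *
    ((cQ n r j * DQ r i j) * hc1 - (cQ n r i * DQ r i j) * hc2 +
      (cQ n r i * cQ n r j * ((i : ℚ) - j)) * hR)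

private lemma star (n r : ℕ) (hr : 1 ≤ r) (hn : 1 ≤ n) (i j : ℕ) :
    gQ n r i j = ∑ k ∈ Finset.range i, (gQ n r (j + 1) k - gQ n r j k) := by
  induction i with
  | zero => simp [gQ_zero]
  | succ m ih =>
      rw [Finset.sum_range_succ, ← ih]
      linarith [step_s17 n r hr hn m j]

private lemma S_symm (n r : ℕ) (hr : 1 ≤ r) (hn : 1 ≤ n) :
    ∀ j i, ∑ k ∈ Finset.range j, gQ n r i k = ∑ k ∈ Finset.range i, gQ n r j k := by
  intro j
  induction j with
  | zero => intro i; simp [gQ_zero]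
  | succ m ih =>
      intro i
      rw [Finset.sum_range_succ, ih i, star n r hr hn i m, ← Finset.sum_add_distrib]
      exact Finset.sum_congr rfl (fun k _ => by ring)

/-- The matrix `B(n,r)` is symmetric: with
`B_{ij}(n,r) = Σ_{k=0}^{j-1} (-1)^{i+k+1} C(n+i+r-2, i) C(n, i) C(n+k+r-2, k) C(n, k)
· i² (∏_{l=0}^{r-3} (i+j+l)) / (r ∏_{l=0}^{r-2} (i+k+l))`,
one has `B_{ij}(n,r) = B_{ji}(n,r)` for all `1 ≤ i, j ≤ n`. -/
theorem B_symmetric (r n : ℕ) (hr : 1 ≤ r) (hn : 1 ≤ n)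
    (B : ℕ → ℕ → ℚ)
    (hB : ∀ i j : ℕ, B i j = ∑ k ∈ Finset.range j,
      (-1 : ℚ) ^ (i + k + 1) * ((n + i + r - 2).choose i : ℚ) * (n.choose i : ℚ) *
        ((n + k + r - 2).choose k : ℚ) * (n.choose k : ℚ) * (i : ℚ) ^ 2 *
        (∏ l ∈ Finset.range (r - 2), ((i + j + l : ℕ) : ℚ)) /
        ((r : ℚ) * ∏ l ∈ Finset.range (r - 1), ((i + k + l : ℕ) : ℚ)))
    (i j : ℕ) (hi1 : 1 ≤ i) (hin : i ≤ n) (hj1 : 1 ≤ j) (hjn : j ≤ n) :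
    B i j = B j i := by
  have key : ∀ a b : ℕ, B a b =
      (∏ l ∈ Finset.range (r - 2), ((a + b + l : ℕ) : ℚ)) / (r : ℚ) *
        ∑ k ∈ Finset.range b, gQ n r a k := by
    intro a b
    rw [hB a b, Finset.mul_sum]
    refine Finset.sum_congr rfl (fun k _ => ?_)
    unfold gQ cQ DQ
    rw [div_eq_mul_inv, div_eq_mul_inv, mul_inv]
    ring
  rw [key i j, key j i, S_symm n r hr hn j i,
    show (∏ l ∈ Finset.range (r - 2), ((i + j + l : ℕ) : ℚ)) =
      (∏ l ∈ Finset.range (r - 2), ((j + i + l : ℕ) : ℚ)) from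
      Finset.prod_congr rfl (fun l _ => by rw [Nat.add_comm i j])]
end

section
/- For all integers n ≥ 1, 1 ≤ i ≤ n, and 0 ≤ k ≤ n−1, the integer i · C(n+i+2, i+k+1) · C(n+k+1, i+k+1) · C(i+k+1, i) · C(i+k, i) is divisible by 3. -/
lemma three_dvd_choose_of_carry (x y : ℕ) (h : 3 ≤ x % 3 + y % 3) :
    3 ∣ (x + y).choose x := by
  haveI : Fact (Nat.Prime 3) := ⟨by norm_num⟩
  have hm := Choose.choose_modEq_choose_mod_mul_choose_div_nat (p := 3) (n := x + y) (k := x)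
  have h1 : (x + y) % 3 < x % 3 := by omega
  rw [Nat.choose_eq_zero_of_lt h1, Nat.zero_mul] at hm
  exact (Nat.modEq_zero_iff_dvd).mp hm

/-- For `n ≥ 1`, `1 ≤ i ≤ n` and `0 ≤ k ≤ n-1`, the integer
`i · C(n+i+2, i+k+1) · C(n+k+1, i+k+1) · C(i+k+1, i) · C(i+k, i)` is divisible
by `3`. -/
theorem C_summand_div_three (n i k : ℕ) (hn : 1 ≤ n) (hi1 : 1 ≤ i) (hin : i ≤ n)
    (hk : k ≤ n - 1) :
    3 ∣ i * (n + i + 2).choose (i + k + 1) * (n + k + 1).choose (i + k + 1) *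
        (i + k + 1).choose i * (i + k).choose i := by
  have H : 3 ∣ i ∨ 3 ≤ i % 3 + k % 3 ∨ 3 ≤ i % 3 + (k + 1) % 3 ∨
      3 ≤ (i + k + 1) % 3 + (n - i) % 3 ∨ 3 ≤ (i + k + 1) % 3 + (n + 1 - k) % 3 := by
    have hi3 : i % 3 = 0 ∨ i % 3 = 1 ∨ i % 3 = 2 := by omega
    have hk3 : k % 3 = 0 ∨ k % 3 = 1 ∨ k % 3 = 2 := by omega
    have hn3 : n % 3 = 0 ∨ n % 3 = 1 ∨ n % 3 = 2 := by omega
    rcases hi3 with h1 | h1 | h1 <;> rcases hk3 with h2 | h2 | h2 <;>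
      rcases hn3 with h3 | h3 | h3 <;> omega
  rcases H with h | h | h | h | h
  · exact dvd_mul_of_dvd_left (dvd_mul_of_dvd_left (dvd_mul_of_dvd_left
      (dvd_mul_of_dvd_left h _) _) _) _
  · exact Dvd.dvd.mul_left (three_dvd_choose_of_carry i k h) _
  · have := three_dvd_choose_of_carry i (k + 1) h
    rw [← add_assoc] at this
    exact dvd_mul_of_dvd_left (Dvd.dvd.mul_left this _) _
  · have := three_dvd_choose_of_carry (i + k + 1) (n - i) h
    have he : (i + k + 1) + (n - i) = n + k + 1 := by omega
    rw [he] at this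
    exact dvd_mul_of_dvd_left (dvd_mul_of_dvd_left (Dvd.dvd.mul_left this _) _) _
  · have := three_dvd_choose_of_carry (i + k + 1) (n + 1 - k) h
    have he : (i + k + 1) + (n + 1 - k) = n + i + 2 := by omega
    rw [he] at this
    exact dvd_mul_of_dvd_left (dvd_mul_of_dvd_left (dvd_mul_of_dvd_left
      (Dvd.dvd.mul_left this _) _) _) _
end
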